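/- arXiv:math/0608222 — 12 statements merged into one kernel-verified Lean document; each statement's English description precedes it below -/
import Mathlib

section
/- F(0) is a subgroup of A, and for every g ∈ A the follower set F(g) is a coset of F(0): for any h ∈ F(g) one has F(g) = h + F(0). Likewise P(0) is a subgroup of A and every predecessor set P(g) is a coset of P(0). -/
/-- For a Markov subgroup `G ⊆ A^ℤ` with incidence matrix `M`,
the follower set `F(0)` is a subgroup of `A`, and every follower set `F(g)` is a
coset of `F(0)`: for any `h ∈ F(g)` one has `F(g) = h + F(0)`.  Likewise the
predecessor set `P(0)` is a subgroup and every `P(g)` is a coset of it. -/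
theorem follower_predecessor_cosets
    {A : Type*} [Fintype A] [DecidableEq A] [AddCommGroup A]
    (M : Matrix A A ℕ) (hM01 : ∀ g h : A, M g h = 0 ∨ M g h = 1)
    (G : AddSubgroup (ℤ → A))
    (hG : (G : Set (ℤ → A)) = {x : ℤ → A | ∀ i : ℤ, M (x i) (x (i + 1)) = 1})
    (hocc : ∀ g : A, ∃ x ∈ (G : Set (ℤ → A)), x 0 = g) :
    (∃ F0 : AddSubgroup A, (F0 : Set A) = {h : A | M 0 h = 1}) ∧
    (∀ g h : A, M g h = 1 →
      {h' : A | M g h' = 1} = (fun f : A => h + f) '' {h' : A | M 0 h' = 1}) ∧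
    (∃ P0 : AddSubgroup A, (P0 : Set A) = {h : A | M h 0 = 1}) ∧
    (∀ g h : A, M h g = 1 →
      {h' : A | M h' g = 1} = (fun f : A => h + f) '' {h' : A | M h' 0 = 1}) := by
  classical
  have hmem : ∀ x : ℤ → A, x ∈ G ↔ ∀ i : ℤ, M (x i) (x (i + 1)) = 1 := by
    intro x
    constructor
    · intro hx
      have hx' : x ∈ (G : Set (ℤ → A)) := hx
      rw [hG] at hx'
      exact hx'
    · intro hx
      have hx' : x ∈ ({x : ℤ → A | ∀ i : ℤ, M (x i) (x (i + 1)) = 1} : Set _) := hx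
      rw [← hG] at hx'
      exact hx'
  have hFex : ∀ g : A, ∃ h, M g h = 1 := by
    intro g
    obtain ⟨x, hx, hx0⟩ := hocc g
    rw [hG] at hx
    have := hx 0
    rw [hx0] at this
    exact ⟨x (0 + 1), this⟩
  have hPex : ∀ g : A, ∃ h, M h g = 1 := by
    intro g
    obtain ⟨x, hx, hx0⟩ := hocc g
    rw [hG] at hx
    have := hx (-1)
    norm_num at this
    rw [hx0] at this
    exact ⟨x (-1), this⟩
  choose f hf using hFex
  choose p hp using hPex
  have key : ∀ g h : A, M g h = 1 → ∃ x, x ∈ G ∧ x 0 = g ∧ x 1 = h := by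
    intro g h hgh
    refine ⟨fun n => if 1 ≤ n then f^[(n - 1).toNat] h else p^[(-n).toNat] g, ?_, ?_, ?_⟩
    · rw [hmem]
      intro i
      rcases lt_trichotomy i 0 with hi | hi | hi
      · have h1 : ¬ (1 : ℤ) ≤ i := by omega
        have h2 : ¬ (1 : ℤ) ≤ i + 1 := by omega
        simp only [if_neg h1, if_neg h2]
        have h3 : (-i).toNat = (-(i + 1)).toNat + 1 := by omega
        rw [h3, Function.iterate_succ_apply']
        exact hp _
      · subst hi
        norm_num
        exact hgh
      · have h1 : (1 : ℤ) ≤ i := hi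
        have h2 : (1 : ℤ) ≤ i + 1 := by omega
        simp only [if_pos h1, if_pos h2]
        have h3 : (i + 1 - 1).toNat = (i - 1).toNat + 1 := by omega
        rw [h3, Function.iterate_succ_apply']
        exact hf _
    · norm_num
    · norm_num
  have e_add : ∀ g h g' h' : A, M g h = 1 → M g' h' = 1 → M (g + g') (h + h') = 1 := by
    intro g h g' h' h1 h2
    obtain ⟨x, hx, hx0, hx1⟩ := key _ _ h1
    obtain ⟨y, hy, hy0, hy1⟩ := key _ _ h2
    have hxy := (hmem _).1 (G.add_mem hx hy) 0
    simpa [hx0, hy0, hx1, hy1] using hxy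
  have e_neg : ∀ g h : A, M g h = 1 → M (-g) (-h) = 1 := by
    intro g h h1
    obtain ⟨x, hx, hx0, hx1⟩ := key _ _ h1
    have hxy := (hmem _).1 (G.neg_mem hx) 0
    simpa [hx0, hx1] using hxy
  have e_zero : M 0 0 = 1 := by
    have := (hmem _).1 G.zero_mem 0
    simpa using this
  have subF : ∃ F0 : AddSubgroup A, (F0 : Set A) = {h : A | M 0 h = 1} := by
    refine ⟨({ carrier := {h : A | M 0 h = 1}
               add_mem' := ?_
               zero_mem' := e_zero
               neg_mem' := ?_ } : AddSubgroup A), rfl⟩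
    · intro a b ha hb
      have := e_add 0 a 0 b ha hb
      simpa using this
    · intro a ha
      have := e_neg 0 a ha
      simpa using this
  have subP : ∃ P0 : AddSubgroup A, (P0 : Set A) = {h : A | M h 0 = 1} := by
    refine ⟨({ carrier := {h : A | M h 0 = 1}
               add_mem' := ?_
               zero_mem' := e_zero
               neg_mem' := ?_ } : AddSubgroup A), rfl⟩
    · intro a b ha hb
      have := e_add a 0 b 0 ha hb
      simpa using this
    · intro a ha
      have := e_neg a 0 ha
      simpa using this
  have cosF : ∀ g h : A, M g h = 1 →
      {h' : A | M g h' = 1} = (fun f : A => h + f) '' {h' : A | M 0 h' = 1} := by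
    intro g h hgh
    ext h'
    simp only [Set.mem_image, Set.mem_setOf_eq]
    constructor
    · intro hh'
      refine ⟨h' - h, ?_, by abel⟩
      have := e_add g h' (-g) (-h) hh' (e_neg _ _ hgh)
      simpa [← sub_eq_add_neg] using this
    · rintro ⟨q, hq0, rfl⟩
      have := e_add g h 0 q hgh hq0
      simpa using this
  have cosP : ∀ g h : A, M h g = 1 →
      {h' : A | M h' g = 1} = (fun f : A => h + f) '' {h' : A | M h' 0 = 1} := by
    intro g h hgh
    ext h'
    simp only [Set.mem_image, Set.mem_setOf_eq]
    constructor
    · intro hh'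
      refine ⟨h' - h, ?_, by abel⟩
      have := e_add h' g (-h) (-g) hh' (e_neg _ _ hgh)
      simpa [← sub_eq_add_neg] using this
    · rintro ⟨q, hq0, rfl⟩
      have := e_add h g q 0 hgh hq0
      simpa using this
  exact ⟨subF, cosF, subP, cosP⟩
end

section
/- The follower group and predecessor group have the same cardinality: |F(0)| = |P(0)|. -/
/-- For a Markov subgroup `G ⊆ A^ℤ` with incidence matrix `M`,
the follower group `F(0)` and the predecessor group `P(0)` have the same
cardinality: `|F(0)| = |P(0)|`. -/
theorem card_followers_eq_card_predecessors
    {A : Type*} [Fintype A] [DecidableEq A] [AddCommGroup A]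
    (M : Matrix A A ℕ) (hM01 : ∀ g h : A, M g h = 0 ∨ M g h = 1)
    (G : AddSubgroup (ℤ → A))
    (hG : (G : Set (ℤ → A)) = {x : ℤ → A | ∀ i : ℤ, M (x i) (x (i + 1)) = 1})
    (hocc : ∀ g : A, ∃ x ∈ (G : Set (ℤ → A)), x 0 = g) :
    Nat.card {h : A // M 0 h = 1} = Nat.card {h : A // M h 0 = 1} := by
  classical
  -- every symbol has a follower and a predecessor
  have hfe : ∀ a : A, ∃ b, M a b = 1 := by
    intro a
    obtain ⟨x, hx, hx0⟩ := hocc a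
    rw [hG] at hx
    exact ⟨x 1, by simpa [hx0] using hx 0⟩
  have hpe : ∀ a : A, ∃ b, M b a = 1 := by
    intro a
    obtain ⟨x, hx, hx0⟩ := hocc a
    rw [hG] at hx
    have := hx (-1)
    norm_num at this
    exact ⟨x (-1), by simpa [hx0] using this⟩
  choose f hf using hfe
  choose p hp using hpe
  -- any allowed edge extends to a point of G
  have hext : ∀ a b, M a b = 1 → ∃ x ∈ (G : Set (ℤ → A)), x 0 = a ∧ x 1 = b := by
    intro a b hab
    refine ⟨fun n => if n ≤ 0 then p^[(-n).toNat] a else f^[(n - 1).toNat] b, ?_, by simp, by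
      norm_num⟩
    rw [hG]
    intro i
    rcases lt_trichotomy i 0 with hi | hi | hi
    · have h1 : i ≤ 0 := le_of_lt hi
      by_cases h2 : i + 1 ≤ 0
      · have : (-i).toNat = (-(i + 1)).toNat + 1 := by omega
        simp only [if_pos h1, if_pos h2, this, Function.iterate_succ_apply']
        exact hp _
      · have h3 : i = -1 := by omega
        subst h3
        norm_num
        exact hp a
    · subst hi
      norm_num
      exact hab
    · have h1 : ¬ i ≤ 0 := by omega
      have h2 : ¬ i + 1 ≤ 0 := by omega
      have : (i + 1 - 1).toNat = (i - 1).toNat + 1 := by omega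
      simp only [if_neg h1, if_neg h2, this, Function.iterate_succ_apply']
      exact hf _
  -- additivity of edges
  have hadd : ∀ a b c d, M a b = 1 → M c d = 1 → M (a + c) (b + d) = 1 := by
    intro a b c d h1 h2
    obtain ⟨x, hx, hx0, hx1⟩ := hext a b h1
    obtain ⟨y, hy, hy0, hy1⟩ := hext c d h2
    have hxy : x + y ∈ (G : Set (ℤ → A)) := G.add_mem hx hy
    rw [hG] at hxy
    have := hxy 0
    simpa [hx0, hx1, hy0, hy1] using this
  have hneg : ∀ a b, M a b = 1 → M (-a) (-b) = 1 := by
    intro a b h1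
    obtain ⟨x, hx, hx0, hx1⟩ := hext a b h1
    have hxn : -x ∈ (G : Set (ℤ → A)) := G.neg_mem hx
    rw [hG] at hxn
    have := hxn 0
    simpa [hx0, hx1] using this
  -- follower sets are cosets of F(0)
  have hFcard : ∀ g : A,
      (Finset.univ.filter fun h => M g h = 1).card
        = (Finset.univ.filter fun h => M 0 h = 1).card := by
    intro g
    have hh0 : M g (f g) = 1 := hf g
    set h0 := f g
    refine Finset.card_bij' (fun h _ => -h0 + h) (fun k _ => h0 + k) ?_ ?_ ?_ ?_
    · intro h hh
      simp only [Finset.mem_filter, Finset.mem_univ, true_and] at hh ⊢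
      have := hadd (-g) (-h0) g h (hneg g h0 hh0) hh
      simpa using this
    · intro k hk
      simp only [Finset.mem_filter, Finset.mem_univ, true_and] at hk ⊢
      have := hadd g h0 0 k hh0 hk
      simpa using this
    · intro h _; exact add_neg_cancel_left h0 h
    · intro k _; exact neg_add_cancel_left h0 k
  have hPcard : ∀ g : A,
      (Finset.univ.filter fun h => M h g = 1).card
        = (Finset.univ.filter fun h => M h 0 = 1).card := by
    intro g
    have hh0 : M (p g) g = 1 := hp g
    set h0 := p g
    refine Finset.card_bij' (fun h _ => -h0 + h) (fun k _ => h0 + k) ?_ ?_ ?_ ?_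
    · intro h hh
      simp only [Finset.mem_filter, Finset.mem_univ, true_and] at hh ⊢
      have := hadd (-h0) (-g) h g (hneg h0 g hh0) hh
      simpa using this
    · intro k hk
      simp only [Finset.mem_filter, Finset.mem_univ, true_and] at hk ⊢
      have := hadd h0 g k 0 hh0 hk
      simpa using this
    · intro h _; exact add_neg_cancel_left h0 h
    · intro k _; exact neg_add_cancel_left h0 k
  -- count the edge set two ways
  set e : Finset (A × A) := Finset.univ.filter fun q => M q.1 q.2 = 1 with he
  have h1 : e.card = Fintype.card A * (Finset.univ.filter fun h => M 0 h = 1).card := by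
    rw [Finset.card_eq_sum_card_fiberwise
      (f := Prod.fst) (t := Finset.univ) (fun x _ => Finset.mem_univ _)]
    have hfib : ∀ g ∈ (Finset.univ : Finset A), (e.filter fun q => q.1 = g).card
        = (Finset.univ.filter fun h => M 0 h = 1).card := by
      intro g _
      rw [← hFcard g]
      refine Finset.card_bij' (fun q _ => q.2) (fun h _ => (g, h)) ?_ ?_ ?_ ?_
      · intro q hq
        simp only [he, Finset.mem_filter, Finset.mem_univ, true_and] at hq ⊢
        rw [← hq.2]; exact hq.1
      · intro h hh
        simp only [he, Finset.mem_filter, Finset.mem_univ, true_and] at hh ⊢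
        exact ⟨hh, trivial⟩
      · intro q hq
        simp only [he, Finset.mem_filter] at hq
        exact Prod.ext hq.2.symm rfl
      · intro h _; rfl
    rw [Finset.sum_congr rfl hfib, Finset.sum_const, smul_eq_mul, Finset.card_univ]
  have h2 : e.card = Fintype.card A * (Finset.univ.filter fun h => M h 0 = 1).card := by
    rw [Finset.card_eq_sum_card_fiberwise
      (f := Prod.snd) (t := Finset.univ) (fun x _ => Finset.mem_univ _)]
    have hfib : ∀ g ∈ (Finset.univ : Finset A), (e.filter fun q => q.2 = g).card
        = (Finset.univ.filter fun h => M h 0 = 1).card := by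
      intro g _
      rw [← hPcard g]
      refine Finset.card_bij' (fun q _ => q.1) (fun h _ => (h, g)) ?_ ?_ ?_ ?_
      · intro q hq
        simp only [he, Finset.mem_filter, Finset.mem_univ, true_and] at hq ⊢
        rw [← hq.2]; exact hq.1
      · intro h hh
        simp only [he, Finset.mem_filter, Finset.mem_univ, true_and] at hh ⊢
        exact ⟨hh, trivial⟩
      · intro q hq
        simp only [he, Finset.mem_filter] at hq
        exact Prod.ext rfl hq.2.symm
      · intro h _; rfl
    rw [Finset.sum_congr rfl hfib, Finset.sum_const, smul_eq_mul, Finset.card_univ]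
  have hA : 0 < Fintype.card A := Fintype.card_pos
  have hkey : (Finset.univ.filter fun h => M 0 h = 1).card
      = (Finset.univ.filter fun h => M h 0 = 1).card :=
    Nat.eq_of_mul_eq_mul_left hA (h1 ▸ h2)
  rw [Nat.card_eq_fintype_card, Nat.card_eq_fintype_card,
    Fintype.card_subtype, Fintype.card_subtype]
  exact hkey
end

section
/- For every n ≥ 1, the n-step follower set F^n(0) is a subgroup of A, and for every g ∈ A the set F^n(g) is a coset of F^n(0); in particular |F^n(g)| = |F^n(0)| for every g ∈ A. -/
section aux

variable {A : Type*} [Fintype A] [DecidableEq A] [AddCommGroup A]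

private lemma msg_chain_of_pow (M : Matrix A A ℕ)
    (hM01 : ∀ g h : A, M g h = 0 ∨ M g h = 1) :
    ∀ (m : ℕ) (g h : A), 0 < (M ^ m) g h →
      ∃ c : ℕ → A, c 0 = g ∧ c m = h ∧ ∀ i < m, M (c i) (c (i + 1)) = 1 := by
  intro m
  induction m with
  | zero =>
    intro g h hpos
    rcases eq_or_ne g h with rfl | hne
    · exact ⟨fun _ => g, rfl, rfl, fun i hi => by omega⟩
    · rw [pow_zero, Matrix.one_apply_ne hne] at hpos; omega
  | succ m ih =>
    intro g h hpos
    rw [pow_succ, Matrix.mul_apply] at hpos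
    have hex : ∃ k, 0 < (M ^ m) g k * M k h := by
      by_contra hk
      push_neg at hk
      have : ∑ k, (M ^ m) g k * M k h = 0 :=
        Finset.sum_eq_zero fun k _ => Nat.le_zero.mp (hk k)
      omega
    obtain ⟨k, hk⟩ := hex
    have h1 : 0 < (M ^ m) g k := by
      rcases Nat.eq_zero_or_pos ((M ^ m) g k) with h0 | h0
      · rw [h0, zero_mul] at hk; omega
      · exact h0
    have h2 : M k h = 1 := by
      rcases hM01 k h with h0 | h0
      · rw [h0, mul_zero] at hk; omega
      · exact h0
    obtain ⟨c, hc0, hcm, hcstep⟩ := ih g k h1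
    refine ⟨fun i => if i ≤ m then c i else h, by simp [hc0], by simp, ?_⟩
    intro i hi
    rcases Nat.lt_succ_iff_lt_or_eq.mp hi with hi' | rfl
    · have : i ≤ m := hi'.le
      have : i + 1 ≤ m := hi'
      simp only [if_pos ‹i ≤ m›, if_pos this]
      exact hcstep i hi'
    · simp [hcm, h2]

private lemma msg_pow_of_chain (M : Matrix A A ℕ) :
    ∀ (m : ℕ) (c : ℕ → A), (∀ i < m, M (c i) (c (i + 1)) = 1) →
      0 < (M ^ m) (c 0) (c m) := by
  intro m
  induction m with
  | zero => intro c _; simp [Matrix.one_apply_eq]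
  | succ m ih =>
    intro c hc
    have h1 : 0 < (M ^ m) (c 0) (c m) := ih c fun i hi => hc i (by omega)
    have h2 : M (c m) (c (m + 1)) = 1 := hc m (by omega)
    rw [pow_succ, Matrix.mul_apply]
    calc 0 < (M ^ m) (c 0) (c m) * M (c m) (c (m + 1)) := by
            rw [h2, mul_one]; exact h1
      _ ≤ ∑ k, (M ^ m) (c 0) k * M k (c (m + 1)) :=
            Finset.single_le_sum (f := fun k => (M ^ m) (c 0) k * M k (c (m + 1)))
              (fun k _ => Nat.zero_le _) (Finset.mem_univ (c m))

private lemma msg_realize (M : Matrix A A ℕ) (G : AddSubgroup (ℤ → A))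
    (hG : (G : Set (ℤ → A)) = {x : ℤ → A | ∀ i : ℤ, M (x i) (x (i + 1)) = 1})
    (hocc : ∀ g : A, ∃ x ∈ (G : Set (ℤ → A)), x 0 = g) :
    ∀ (m : ℕ) (c : ℕ → A), (∀ i < m, M (c i) (c (i + 1)) = 1) →
      ∃ x ∈ (G : Set (ℤ → A)), ∀ i : ℕ, i ≤ m → x (i : ℤ) = c i := by
  intro m
  induction m with
  | zero =>
    intro c _
    obtain ⟨x, hx, hx0⟩ := hocc (c 0)
    exact ⟨x, hx, fun i hi => by obtain rfl : i = 0 := Nat.le_zero.mp hi; simpa using hx0⟩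
  | succ m ih =>
    intro c hc
    obtain ⟨x, hx, hxc⟩ := ih c fun i hi => hc i (by omega)
    obtain ⟨z, hz, hz0⟩ := hocc (c (m + 1))
    have hxstep : ∀ i : ℤ, M (x i) (x (i + 1)) = 1 := by
      rw [SetLike.mem_coe, ← SetLike.mem_coe, hG] at hx; exact hx
    have hzstep : ∀ i : ℤ, M (z i) (z (i + 1)) = 1 := by
      rw [SetLike.mem_coe, ← SetLike.mem_coe, hG] at hz; exact hz
    refine ⟨fun j => if j ≤ (m : ℤ) then x j else z (j - (m + 1)), ?_, ?_⟩
    · rw [SetLike.mem_coe, ← SetLike.mem_coe, hG]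
      intro i
      rcases lt_trichotomy i (m : ℤ) with hi | rfl | hi
      · have h1 : i ≤ (m : ℤ) := hi.le
        have h2 : i + 1 ≤ (m : ℤ) := hi
        simp only [if_pos h1, if_pos h2]
        exact hxstep i
      · have h1 : (m : ℤ) ≤ (m : ℤ) := le_refl _
        have h2 : ¬ ((m : ℤ) + 1 ≤ (m : ℤ)) := by omega
        simp only [if_pos h1, if_neg h2]
        have e1 : x (m : ℤ) = c m := hxc m (le_refl m)
        have e2 : z ((m : ℤ) + 1 - (m + 1)) = c (m + 1) := by
          have : (m : ℤ) + 1 - (m + 1) = 0 := by push_cast; ring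
          rw [this, hz0]
        rw [e1, e2]
        exact hc m (by omega)
      · have h1 : ¬ (i ≤ (m : ℤ)) := by omega
        have h2 : ¬ (i + 1 ≤ (m : ℤ)) := by omega
        simp only [if_neg h1, if_neg h2]
        have : i + 1 - (m + 1) = (i - (m + 1)) + 1 := by ring
        rw [this]
        exact hzstep _
    · intro i hi
      by_cases hle : i ≤ m
      · have h1 : (i : ℤ) ≤ (m : ℤ) := by exact_mod_cast hle
        simp only [if_pos h1]
        exact hxc i hle
      · have hi1 : i = m + 1 := by omega
        subst hi1
        have h1 : ¬ ((((m : ℕ) + 1 : ℕ) : ℤ) ≤ (m : ℤ)) := by push_cast; omega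
        simp only [if_neg h1]
        have e : (((m : ℕ) + 1 : ℕ) : ℤ) - (m + 1) = 0 := by push_cast; omega
        rw [e, hz0]

private lemma msg_key (M : Matrix A A ℕ)
    (hM01 : ∀ g h : A, M g h = 0 ∨ M g h = 1) (G : AddSubgroup (ℤ → A))
    (hG : (G : Set (ℤ → A)) = {x : ℤ → A | ∀ i : ℤ, M (x i) (x (i + 1)) = 1})
    (hocc : ∀ g : A, ∃ x ∈ (G : Set (ℤ → A)), x 0 = g)
    (m : ℕ) (g h : A) :
    0 < (M ^ m) g h ↔ ∃ x ∈ (G : Set (ℤ → A)), x 0 = g ∧ x (m : ℤ) = h := by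
  constructor
  · intro hpos
    obtain ⟨c, hc0, hcm, hcstep⟩ := msg_chain_of_pow M hM01 m g h hpos
    obtain ⟨x, hx, hxc⟩ := msg_realize M G hG hocc m c hcstep
    refine ⟨x, hx, ?_, ?_⟩
    · have := hxc 0 (Nat.zero_le _); simpa [hc0] using this
    · rw [hxc m (le_refl m), hcm]
  · rintro ⟨x, hx, hx0, hxm⟩
    have hxstep : ∀ i : ℤ, M (x i) (x (i + 1)) = 1 := by
      rw [SetLike.mem_coe, ← SetLike.mem_coe, hG] at hx; exact hx
    have := msg_pow_of_chain M m (fun i => x (i : ℤ)) (fun i _ => by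
      show M (x (i : ℤ)) (x ((i + 1 : ℕ) : ℤ)) = 1
      push_cast
      exact hxstep i)
    rw [show ((0 : ℕ) : ℤ) = 0 from rfl, hx0, hxm] at this
    exact this

end aux

/-- For a Markov subgroup `G ⊆ A^ℤ` with incidence matrix `M`,
for every `n ≥ 1` the `n`-step follower set `F^n(0) = {h | (M^n)_{0h} > 0}` is a
subgroup of `A`, every `F^n(g)` is a coset of `F^n(0)`, and in particular
`|F^n(g)| = |F^n(0)|` for every `g ∈ A`. -/
theorem nstep_followers_cosets
    {A : Type*} [Fintype A] [DecidableEq A] [AddCommGroup A]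
    (M : Matrix A A ℕ) (hM01 : ∀ g h : A, M g h = 0 ∨ M g h = 1)
    (G : AddSubgroup (ℤ → A))
    (hG : (G : Set (ℤ → A)) = {x : ℤ → A | ∀ i : ℤ, M (x i) (x (i + 1)) = 1})
    (hocc : ∀ g : A, ∃ x ∈ (G : Set (ℤ → A)), x 0 = g)
    (n : ℕ) (hn : 1 ≤ n) :
    (∃ Fn0 : AddSubgroup A, (Fn0 : Set A) = {h : A | 0 < (M ^ n) 0 h}) ∧
    (∀ g : A, ∃ h : A,
      {h' : A | 0 < (M ^ n) g h'} = (fun f : A => h + f) '' {h' : A | 0 < (M ^ n) 0 h'}) ∧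
    (∀ g : A, Nat.card {h : A // 0 < (M ^ n) g h} = Nat.card {h : A // 0 < (M ^ n) 0 h}) := by
  have key := msg_key M hM01 G hG hocc n
  -- the coset statement
  have hcoset : ∀ g : A, ∃ h : A,
      {h' : A | 0 < (M ^ n) g h'} = (fun f : A => h + f) '' {h' : A | 0 < (M ^ n) 0 h'} := by
    intro g
    obtain ⟨x, hx, hx0⟩ := hocc g
    refine ⟨x (n : ℤ), ?_⟩
    ext h'
    simp only [Set.mem_setOf_eq, Set.mem_image]
    constructor
    · intro hp
      obtain ⟨y, hy, hy0, hyn⟩ := (key g h').mp hp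
      refine ⟨h' - x (n : ℤ), ?_, by abel⟩
      refine (key 0 (h' - x (n : ℤ))).mpr ⟨y - x, sub_mem hy hx, ?_, ?_⟩
      · simp [Pi.sub_apply, hy0, hx0]
      · simp [Pi.sub_apply, hyn]
    · rintro ⟨f, hf, rfl⟩
      obtain ⟨z, hz, hz0, hzn⟩ := (key 0 f).mp hf
      refine (key g (x (n : ℤ) + f)).mpr ⟨x + z, add_mem hx hz, ?_, ?_⟩
      · simp [Pi.add_apply, hx0, hz0]
      · simp [Pi.add_apply, hzn]
  refine ⟨?_, hcoset, ?_⟩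
  · -- subgroup
    refine ⟨{ carrier := {h : A | 0 < (M ^ n) 0 h}
              zero_mem' := ?_
              add_mem' := ?_
              neg_mem' := ?_ }, rfl⟩
    · -- add_mem'
      intro a b ha hb
      obtain ⟨x, hx, hx0, hxn⟩ := (key 0 a).mp ha
      obtain ⟨y, hy, hy0, hyn⟩ := (key 0 b).mp hb
      refine (key 0 (a + b)).mpr ⟨x + y, add_mem hx hy, ?_, ?_⟩
      · simp [Pi.add_apply, hx0, hy0]
      · simp [Pi.add_apply, hxn, hyn]
    · -- zero_mem'
      exact (key 0 0).mpr ⟨0, zero_mem G, rfl, rfl⟩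
    · intro a ha
      obtain ⟨x, hx, hx0, hxn⟩ := (key 0 a).mp ha
      refine (key 0 (-a)).mpr ⟨-x, neg_mem hx, ?_, ?_⟩
      · simp [Pi.neg_apply, hx0]
      · simp [Pi.neg_apply, hxn]
  · -- cardinality
    intro g
    obtain ⟨h, hcos⟩ := hcoset g
    have h1 : Nat.card {h' : A | 0 < (M ^ n) g h'} =
        Nat.card {h' : A | 0 < (M ^ n) 0 h'} := by
      rw [hcos]
      exact Nat.card_image_of_injective (add_right_injective h) _
    exact h1
end

section
/- If F^n(0) = A for some n ≥ 1, then the mixing property holds: F^m(g) = A for every m ≥ n and every g ∈ A. -/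
section Aux

variable {A : Type*} [Fintype A] [DecidableEq A] [AddCommGroup A]

/-- positivity of a matrix product entry gives an intermediate vertex -/
lemma mix_mul_pos_iff (P Q : Matrix A A ℕ) (a b : A) :
    0 < (P * Q) a b ↔ ∃ k, 0 < P a k ∧ 0 < Q k b := by
  rw [Matrix.mul_apply]
  constructor
  · intro h
    by_contra hc
    push_neg at hc
    have : ∑ k, P a k * Q k b = 0 := by
      apply Finset.sum_eq_zero
      intro k _
      rcases Nat.eq_zero_or_pos (P a k) with h1 | h1
      · simp [h1]
      · have hz : Q k b = 0 := by
          have := hc k h1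
          omega
        simp [hz]
    omega
  · rintro ⟨k, h1, h2⟩
    calc 0 < P a k * Q k b := Nat.mul_pos h1 h2
      _ ≤ ∑ k, P a k * Q k b :=
        Finset.single_le_sum (f := fun k => P a k * Q k b) (fun _ _ => Nat.zero_le _)
          (Finset.mem_univ k)

end Aux

/-- For a Markov subgroup `G ⊆ A^ℤ` with incidence matrix `M`,
if `F^n(0) = A` for some `n ≥ 1`, then the mixing property holds:
`F^m(g) = A` for every `m ≥ n` and every `g ∈ A`. -/
theorem mixing_of_irreducible
    {A : Type*} [Fintype A] [DecidableEq A] [AddCommGroup A]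
    (M : Matrix A A ℕ) (hM01 : ∀ g h : A, M g h = 0 ∨ M g h = 1)
    (G : AddSubgroup (ℤ → A))
    (hG : (G : Set (ℤ → A)) = {x : ℤ → A | ∀ i : ℤ, M (x i) (x (i + 1)) = 1})
    (hocc : ∀ g : A, ∃ x ∈ (G : Set (ℤ → A)), x 0 = g)
    (n : ℕ) (hn : 1 ≤ n) (hfull : ∀ h : A, 0 < (M ^ n) 0 h) :
    ∀ m : ℕ, n ≤ m → ∀ g h : A, 0 < (M ^ m) g h := by
  have hmem : ∀ x : ℤ → A, x ∈ G ↔ ∀ i : ℤ, M (x i) (x (i + 1)) = 1 := by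
    intro x
    simpa using Set.ext_iff.mp hG x
  -- every allowed edge is realized by a point of G
  have hreal : ∀ a b : A, M a b = 1 → ∃ z ∈ G, z 0 = a ∧ z 1 = b := by
    intro a b hab
    obtain ⟨x, hx, hx0⟩ := hocc a
    obtain ⟨y, hy, hy0⟩ := hocc b
    replace hx := (hmem x).mp hx
    replace hy := (hmem y).mp hy
    refine ⟨fun i => if i ≤ 0 then x i else y (i - 1), ?_, by simp [hx0], by simpa using hy0⟩
    rw [hmem]
    intro i
    rcases lt_trichotomy i 0 with h | h | h
    · have h1 : i ≤ 0 := le_of_lt h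
      have h2 : i + 1 ≤ 0 := h
      simp only [h1, h2, if_pos]
      exact hx i
    · subst h
      norm_num
      rw [hx0, hy0]
      exact hab
    · have h1 : ¬ i ≤ 0 := not_le.mpr h
      have h2 : ¬ i + 1 ≤ 0 := by omega
      simp only [h1, h2, if_neg, not_false_iff]
      have := hy (i - 1)
      simpa [sub_add_cancel] using this
  -- edges are closed under addition
  have hedgeadd : ∀ a b c d : A, M a b = 1 → M c d = 1 → M (a + c) (b + d) = 1 := by
    intro a b c d h1 h2
    obtain ⟨z, hz, hz0, hz1⟩ := hreal a b h1
    obtain ⟨w, hw, hw0, hw1⟩ := hreal c d h2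
    have hzw : z + w ∈ G := add_mem hz hw
    rw [hmem] at hzw
    have := hzw 0
    simpa [hz0, hz1, hw0, hw1] using this
  -- positivity version of edge addition
  have hedgeadd' : ∀ a b c d : A, 0 < M a b → 0 < M c d → 0 < M (a + c) (b + d) := by
    intro a b c d h1 h2
    have e1 : M a b = 1 := by rcases hM01 a b with h | h <;> omega
    have e2 : M c d = 1 := by rcases hM01 c d with h | h <;> omega
    rw [hedgeadd a b c d e1 e2]
    norm_num
  -- walks of equal length are closed under addition
  have hwalkadd : ∀ m : ℕ, ∀ a b c d : A,
      0 < (M ^ m) a b → 0 < (M ^ m) c d → 0 < (M ^ m) (a + c) (b + d) := by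
    intro m
    induction m with
    | zero =>
      intro a b c d h1 h2
      simp only [pow_zero] at *
      rcases eq_or_ne a b with rfl | hab
      · rcases eq_or_ne c d with rfl | hcd
        · simp
        · simp [Matrix.one_apply_ne hcd] at h2
      · simp [Matrix.one_apply_ne hab] at h1
    | succ k ih =>
      intro a b c d h1 h2
      rw [pow_succ', mix_mul_pos_iff] at h1 h2 ⊢
      obtain ⟨p, hp1, hp2⟩ := h1
      obtain ⟨q, hq1, hq2⟩ := h2
      exact ⟨p + q, hedgeadd' a p c q hp1 hq1, ih p b q d hp2 hq2⟩
  -- M 0 0 = 1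
  have h00 : 0 < M 0 0 := by
    have h0 : (0 : ℤ → A) ∈ G := zero_mem G
    rw [hmem] at h0
    have := h0 0
    simp only [Pi.zero_apply] at this
    omega
  have hpow00 : ∀ m : ℕ, 0 < (M ^ m) 0 0 := by
    intro m
    induction m with
    | zero => simp
    | succ k ih =>
      rw [pow_succ, mix_mul_pos_iff]
      exact ⟨0, ih, h00⟩
  -- walks along points of G
  have hwalkG : ∀ x : ℤ → A, x ∈ G → ∀ m : ℕ, ∀ i : ℤ, 0 < (M ^ m) (x i) (x (i + m)) := by
    intro x hx m
    induction m with
    | zero => intro i; simp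
    | succ k ih =>
      intro i
      rw [pow_succ', mix_mul_pos_iff]
      refine ⟨x (i + 1), ?_, ?_⟩
      · have := (hmem x).mp hx i
        omega
      · have := ih (i + 1)
        have heq : i + 1 + (k : ℤ) = i + ((k : ℕ) + 1 : ℕ) := by push_cast; ring
        rwa [heq] at this
  -- main argument
  intro m hm g h
  obtain ⟨x, hx, hx0⟩ := hocc g
  set k : A := x (m : ℤ) with hk
  have w1 : 0 < (M ^ m) g k := by
    have := hwalkG x hx m 0
    simpa [hx0] using this
  have w2 : 0 < (M ^ m) 0 (h - k) := by
    have hsplit : m = (m - n) + n := by omega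
    rw [hsplit, pow_add, mix_mul_pos_iff]
    exact ⟨0, hpow00 (m - n), hfull (h - k)⟩
  have := hwalkadd m g k 0 (h - k) w1 w2
  simpa using this
end

section
/- For every n ≥ 1 and all g_0, g_n ∈ A with (M^n)_{g_0 g_n} > 0, one has |C^n(g_0, g_n)| = |C^n(0,0)|; equivalently, all nonzero entries of the matrix M^n (computed over the natural numbers) are equal to (M^n)_{00}. -/
lemma card_paths {A : Type*} [Fintype A] [DecidableEq A]
    (M : Matrix A A ℕ) (hM01 : ∀ g h : A, M g h = 0 ∨ M g h = 1) :
    ∀ (n : ℕ) (g h : A),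
      Fintype.card {z : Fin (n + 1) → A // z 0 = g ∧ z (Fin.last n) = h ∧
        ∀ i : Fin n, M (z i.castSucc) (z i.succ) = 1} = (M ^ n) g h
  | 0, g, h => by
    rw [pow_zero, Matrix.one_apply]
    rcases eq_or_ne g h with rfl | hne
    · rw [if_pos rfl]
      refine Fintype.card_eq_one_iff.mpr ⟨⟨fun _ => g, rfl, rfl, fun i => i.elim0⟩, ?_⟩
      rintro ⟨y, hy0, hyl, -⟩
      exact Subtype.ext (funext fun i => by show y i = g; rw [Fin.eq_zero i]; exact hy0)
    · rw [if_neg hne]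
      refine Fintype.card_eq_zero_iff.mpr ⟨?_⟩
      rintro ⟨y, hy0, hyl, -⟩
      have : (Fin.last 0) = (0 : Fin 1) := Fin.eq_zero _
      rw [this, hy0] at hyl
      exact hne hyl
  | (n + 1), g, h => by
    have e1 : {z : Fin (n + 2) → A // z 0 = g ∧ z (Fin.last (n + 1)) = h ∧
        ∀ i : Fin (n + 1), M (z i.castSucc) (z i.succ) = 1} ≃
        {p : A × (Fin (n + 1) → A) // M g p.1 = 1 ∧ p.2 0 = p.1 ∧ p.2 (Fin.last n) = h ∧
          ∀ i : Fin n, M (p.2 i.castSucc) (p.2 i.succ) = 1} := by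
      refine ⟨fun z => ⟨(z.1 1, Fin.tail z.1), by
          have := z.2.2.2 0
          rwa [Fin.castSucc_zero, Fin.succ_zero_eq_one, z.2.1] at this, by
          show z.1 (Fin.succ 0) = z.1 1
          rw [Fin.succ_zero_eq_one], by
          show z.1 (Fin.last n).succ = h
          rw [Fin.succ_last]; exact z.2.2.1, by
          intro i
          have := z.2.2.2 i.succ
          rwa [← Fin.succ_castSucc] at this⟩,
        fun p => ⟨Fin.cons g p.1.2, Fin.cons_zero _ _, by
          obtain ⟨⟨k, z⟩, h1, hz0, hzl, hzs⟩ := p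
          dsimp only
          dsimp only at h1 hz0 hzl hzs
          rw [← Fin.succ_last, Fin.cons_succ]
          exact hzl, by
          obtain ⟨⟨k, z⟩, h1, hz0, hzl, hzs⟩ := p
          dsimp only
          dsimp only at h1 hz0 hzl hzs
          intro i
          refine Fin.cases ?_ (fun j => ?_) i
          · rw [Fin.castSucc_zero, Fin.cons_zero, Fin.succ_zero_eq_one,
              ← Fin.succ_zero_eq_one, Fin.cons_succ, hz0]
            exact h1
          · rw [← Fin.succ_castSucc, Fin.cons_succ, Fin.cons_succ]
            exact hzs j⟩, ?_, ?_⟩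
      · rintro ⟨z, hz0, hzl, hzs⟩
        apply Subtype.ext
        show Fin.cons g (Fin.tail z) = z
        rw [← hz0, Fin.cons_self_tail]
      · rintro ⟨⟨k, z⟩, h1, hz0, hzl, hzs⟩
        dsimp only at h1 hz0 hzl hzs
        apply Subtype.ext
        show (Fin.cons (α := fun _ => A) g z 1, Fin.tail (Fin.cons (α := fun _ => A) g z)) = (k, z)
        rw [Fin.tail_cons, ← Fin.succ_zero_eq_one, Fin.cons_succ, hz0]
    have e2 := Equiv.subtypeProdEquivSigmaSubtype
      (fun (k : A) (z : Fin (n + 1) → A) => M g k = 1 ∧ z 0 = k ∧ z (Fin.last n) = h ∧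
        ∀ i : Fin n, M (z i.castSucc) (z i.succ) = 1)
    rw [Fintype.card_congr (e1.trans e2), Fintype.card_sigma, pow_succ', Matrix.mul_apply]
    refine Finset.sum_congr rfl fun k _ => ?_
    rcases hM01 g k with h0 | h1
    · have hz : M g k * (M ^ n) k h = 0 := by rw [h0, zero_mul]
      rw [hz]
      refine Fintype.card_eq_zero_iff.mpr ⟨?_⟩
      rintro ⟨z, h1, -⟩
      rw [h0] at h1
      exact zero_ne_one h1
    · have : {z : Fin (n + 1) → A // M g k = 1 ∧ z 0 = k ∧ z (Fin.last n) = h ∧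
          ∀ i : Fin n, M (z i.castSucc) (z i.succ) = 1} ≃
          {z : Fin (n + 1) → A // z 0 = k ∧ z (Fin.last n) = h ∧
          ∀ i : Fin n, M (z i.castSucc) (z i.succ) = 1} :=
        Equiv.subtypeEquivRight fun z => and_iff_right h1
      rw [Fintype.card_congr this, card_paths M hM01 n k h, h1, one_mul]

def spliceFun {A : Type*} (n : ℕ) (a b : ℤ → A) (z : Fin (n + 1) → A) : ℤ → A :=
  fun j => if j < 0 then a j else if hj : j.toNat < n then z ⟨j.toNat, by omega⟩ else b (j - n)

lemma splice_exists {A : Type*} [Fintype A] [DecidableEq A] [AddCommGroup A]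
    (M : Matrix A A ℕ) (G : AddSubgroup (ℤ → A))
    (hG : (G : Set (ℤ → A)) = {x : ℤ → A | ∀ i : ℤ, M (x i) (x (i + 1)) = 1})
    (hocc : ∀ g : A, ∃ x ∈ (G : Set (ℤ → A)), x 0 = g)
    (n : ℕ) (hn : 1 ≤ n) (z : Fin (n + 1) → A)
    (hz : ∀ i : Fin n, M (z i.castSucc) (z i.succ) = 1) :
    ∃ x ∈ (G : Set (ℤ → A)), ∀ i : Fin (n + 1), x ((i : ℕ) : ℤ) = z i := by
  obtain ⟨a, haG, ha0⟩ := hocc (z 0)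
  obtain ⟨b, hbG, hb0⟩ := hocc (z (Fin.last n))
  have ha' : ∀ i : ℤ, M (a i) (a (i + 1)) = 1 := by rw [hG] at haG; exact haG
  have hb' : ∀ i : ℤ, M (b i) (b (i + 1)) = 1 := by rw [hG] at hbG; exact hbG
  have hz' : ∀ (j : ℕ) (hj : j < n),
      M (z ⟨j, by omega⟩) (z ⟨j + 1, by omega⟩) = 1 := by
    intro j hj
    have := hz ⟨j, hj⟩
    rwa [Fin.castSucc_mk, Fin.succ_mk] at this
  set x : ℤ → A := spliceFun n a b z with hx
  have hxa : ∀ j : ℤ, j < 0 → x j = a j := by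
    intro j hj; rw [hx]; unfold spliceFun; rw [if_pos hj]
  have hxz : ∀ (j : ℤ) (h0 : ¬ j < 0) (h1 : j.toNat < n),
      x j = z ⟨j.toNat, by omega⟩ := by
    intro j h0 h1; rw [hx]; unfold spliceFun; rw [if_neg h0, dif_pos h1]
  have hxb : ∀ (j : ℤ) (h0 : ¬ j < 0) (h1 : ¬ j.toNat < n), x j = b (j - n) := by
    intro j h0 h1; rw [hx]; unfold spliceFun; rw [if_neg h0, dif_neg h1]
  have hmem : ∀ i : ℤ, M (x i) (x (i + 1)) = 1 := by
    intro i
    rcases lt_trichotomy i (-1) with hi | hi | hi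
    · rw [hxa i (by omega), hxa (i + 1) (by omega)]
      exact ha' i
    · subst hi
      rw [hxa (-1) (by omega)]
      have : x (-1 + 1) = a 0 := by
        rw [show (-1 + 1 : ℤ) = 0 by ring, hxz 0 (by omega) (by omega), ha0]
        exact congrArg z (Fin.ext (by simp))
      rw [this]
      exact ha' (-1)
    · -- i ≥ 0
      have hi0 : 0 ≤ i := by omega
      by_cases hin : i.toNat < n
      · -- 0 ≤ i < n
        rw [hxz i (by omega) hin]
        have hstep := hz' i.toNat hin
        have hx1 : x (i + 1) = z ⟨i.toNat + 1, by omega⟩ := by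
          by_cases hin1 : (i + 1).toNat < n
          · rw [hxz (i + 1) (by omega) hin1]
            congr 1
            exact Fin.ext (by simp; omega)
          · have hieq : i.toNat + 1 = n := by omega
            rw [hxb (i + 1) (by omega) hin1]
            have : (i + 1 - n : ℤ) = 0 := by omega
            rw [this, hb0]
            exact congrArg z (Fin.ext (by simp [Fin.last]; omega))
        rw [hx1]
        exact hstep
      · -- i ≥ n
        rw [hxb i (by omega) hin, hxb (i + 1) (by omega) (by omega)]
        have := hb' (i - n)
        rwa [show (i - n + 1 : ℤ) = i + 1 - n by ring] at this
  refine ⟨x, by rw [hG]; exact hmem, ?_⟩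
  intro i
  by_cases hin : (i : ℕ) < n
  · rw [hxz ((i : ℕ) : ℤ) (by omega) (by simp [hin])]
    exact congrArg z (Fin.ext (by simp))
  · have hieq : (i : ℕ) = n := by omega
    rw [hxb ((i : ℕ) : ℤ) (by omega) (by simp; omega)]
    rw [show (((i : ℕ) : ℤ) - n) = 0 by omega, hb0]
    exact congrArg z (Fin.ext (by simp [Fin.last]; omega))

lemma allowed_add {A : Type*} [Fintype A] [DecidableEq A] [AddCommGroup A]
    (M : Matrix A A ℕ) (G : AddSubgroup (ℤ → A))
    (hG : (G : Set (ℤ → A)) = {x : ℤ → A | ∀ i : ℤ, M (x i) (x (i + 1)) = 1})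
    (hocc : ∀ g : A, ∃ x ∈ (G : Set (ℤ → A)), x 0 = g)
    (n : ℕ) (hn : 1 ≤ n) (z w : Fin (n + 1) → A)
    (hz : ∀ i : Fin n, M (z i.castSucc) (z i.succ) = 1)
    (hw : ∀ i : Fin n, M (w i.castSucc) (w i.succ) = 1) :
    ∀ i : Fin n, M ((z + w) i.castSucc) ((z + w) i.succ) = 1 := by
  obtain ⟨x, hxG, hxz⟩ := splice_exists M G hG hocc n hn z hz
  obtain ⟨y, hyG, hyw⟩ := splice_exists M G hG hocc n hn w hw
  have hxyG : x + y ∈ (G : Set (ℤ → A)) := G.add_mem hxG hyG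
  rw [hG] at hxyG
  intro i
  have key := hxyG ((i.castSucc : ℕ) : ℤ)
  have h1 : (((i.castSucc : ℕ) : ℤ) + 1) = ((i.succ : ℕ) : ℤ) := by
    rw [Fin.coe_castSucc, Fin.val_succ]; push_cast; ring
  rw [h1] at key
  have e1 : (x + y) ((i.castSucc : ℕ) : ℤ) = (z + w) i.castSucc := by
    show x _ + y _ = z _ + w _
    rw [hxz i.castSucc, hyw i.castSucc]
  have e2 : (x + y) ((i.succ : ℕ) : ℤ) = (z + w) i.succ := by
    show x _ + y _ = z _ + w _
    rw [hxz i.succ, hyw i.succ]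
  rwa [e1, e2] at key

lemma allowed_neg {A : Type*} [Fintype A] [DecidableEq A] [AddCommGroup A]
    (M : Matrix A A ℕ) (G : AddSubgroup (ℤ → A))
    (hG : (G : Set (ℤ → A)) = {x : ℤ → A | ∀ i : ℤ, M (x i) (x (i + 1)) = 1})
    (hocc : ∀ g : A, ∃ x ∈ (G : Set (ℤ → A)), x 0 = g)
    (n : ℕ) (hn : 1 ≤ n) (z : Fin (n + 1) → A)
    (hz : ∀ i : Fin n, M (z i.castSucc) (z i.succ) = 1) :
    ∀ i : Fin n, M ((-z) i.castSucc) ((-z) i.succ) = 1 := by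
  obtain ⟨x, hxG, hxz⟩ := splice_exists M G hG hocc n hn z hz
  have hnG : -x ∈ (G : Set (ℤ → A)) := G.neg_mem hxG
  rw [hG] at hnG
  intro i
  have key := hnG ((i.castSucc : ℕ) : ℤ)
  have h1 : (((i.castSucc : ℕ) : ℤ) + 1) = ((i.succ : ℕ) : ℤ) := by
    rw [Fin.coe_castSucc, Fin.val_succ]; push_cast; ring
  rw [h1] at key
  have e1 : (-x) ((i.castSucc : ℕ) : ℤ) = (-z) i.castSucc := by
    show -x _ = -z _
    rw [hxz i.castSucc]
  have e2 : (-x) ((i.succ : ℕ) : ℤ) = (-z) i.succ := by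
    show -x _ = -z _
    rw [hxz i.succ]
  rwa [e1, e2] at key

/-- For a Markov subgroup `G ⊆ A^ℤ` with incidence matrix `M`,
for every `n ≥ 1` and all `g₀, gₙ ∈ A` with `(M^n)_{g₀gₙ} > 0`, the number of
`M`-paths of length `n` from `g₀` to `gₙ` satisfies `|C^n(g₀,gₙ)| = |C^n(0,0)|`;
equivalently all nonzero entries of `M^n` (over ℕ) equal `(M^n)_{00}`. -/
theorem path_counts_constant
    {A : Type*} [Fintype A] [DecidableEq A] [AddCommGroup A]
    (M : Matrix A A ℕ) (hM01 : ∀ g h : A, M g h = 0 ∨ M g h = 1)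
    (G : AddSubgroup (ℤ → A))
    (hG : (G : Set (ℤ → A)) = {x : ℤ → A | ∀ i : ℤ, M (x i) (x (i + 1)) = 1})
    (hocc : ∀ g : A, ∃ x ∈ (G : Set (ℤ → A)), x 0 = g)
    (n : ℕ) (hn : 1 ≤ n) :
    (∀ g h : A, 0 < (M ^ n) g h →
      Nat.card {z : Fin (n + 1) → A // z 0 = g ∧ z (Fin.last n) = h ∧
          ∀ i : Fin n, M (z i.castSucc) (z i.succ) = 1} =
      Nat.card {z : Fin (n + 1) → A // z 0 = 0 ∧ z (Fin.last n) = 0 ∧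
          ∀ i : Fin n, M (z i.castSucc) (z i.succ) = 1}) ∧
    (∀ g h : A, 0 < (M ^ n) g h → (M ^ n) g h = (M ^ n) 0 0) := by
  have key : ∀ g h : A, 0 < (M ^ n) g h →
      Nat.card {z : Fin (n + 1) → A // z 0 = g ∧ z (Fin.last n) = h ∧
          ∀ i : Fin n, M (z i.castSucc) (z i.succ) = 1} =
      Nat.card {z : Fin (n + 1) → A // z 0 = 0 ∧ z (Fin.last n) = 0 ∧
          ∀ i : Fin n, M (z i.castSucc) (z i.succ) = 1} := by
    intro g h hpos
    rw [← card_paths M hM01 n g h] at hpos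
    obtain ⟨⟨z₀, hz₀0, hz₀l, hz₀s⟩⟩ := Fintype.card_pos_iff.mp hpos
    refine Nat.card_congr ⟨fun z => ⟨z.1 - z₀, ?_, ?_, ?_⟩, fun w => ⟨w.1 + z₀, ?_, ?_, ?_⟩,
      ?_, ?_⟩
    · show z.1 0 - z₀ 0 = 0
      rw [z.2.1, hz₀0, sub_self]
    · show z.1 (Fin.last n) - z₀ (Fin.last n) = 0
      rw [z.2.2.1, hz₀l, sub_self]
    · have := allowed_add M G hG hocc n hn z.1 (-z₀) z.2.2.2
        (allowed_neg M G hG hocc n hn z₀ hz₀s)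
      rwa [← sub_eq_add_neg] at this
    · show w.1 0 + z₀ 0 = g
      rw [w.2.1, hz₀0, zero_add]
    · show w.1 (Fin.last n) + z₀ (Fin.last n) = h
      rw [w.2.2.1, hz₀l, zero_add]
    · exact allowed_add M G hG hocc n hn w.1 z₀ w.2.2.2 hz₀s
    · intro z
      apply Subtype.ext
      show z.1 - z₀ + z₀ = z.1
      rw [sub_add_cancel]
    · intro w
      apply Subtype.ext
      show w.1 + z₀ - z₀ = w.1
      rw [add_sub_cancel_right]
  refine ⟨key, fun g h hpos => ?_⟩
  have h1 := key g h hpos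
  rw [Nat.card_eq_fintype_card, Nat.card_eq_fintype_card,
    card_paths M hM01 n g h, card_paths M hM01 n 0 0] at h1
  exact h1
end

section
/- For every n ≥ r and all g, h ∈ A, the number of M-paths of length n from g to h equals |C^n(g,h)| = |F|^n / |A|; in particular |A| divides |F|^n and all entries of M^n are equal. -/
theorem card_eq_mul_card_ker {H K : Type*} [AddGroup H] [AddGroup K]
    (f : H →+ K) (hs : Function.Surjective f) :
    Nat.card H = Nat.card K * Nat.card f.ker := by
  rw [AddSubgroup.card_eq_card_quotient_mul_card_addSubgroup f.ker]
  congr 1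
  exact Nat.card_congr (QuotientAddGroup.quotientKerEquivOfSurjective f hs).toEquiv

theorem card_fiber_eq_card_ker {H K : Type*} [AddGroup H] [AddGroup K]
    (f : H →+ K) (x₀ : H) :
    Nat.card {x : H // f x = f x₀} = Nat.card f.ker := by
  refine Nat.card_congr ⟨fun x => ⟨x.1 - x₀, show f _ = 0 by rw [map_sub, x.2, sub_self]⟩,
    fun y => ⟨y.1 + x₀, ?_⟩, ?_, ?_⟩
  · have : f y.1 = 0 := y.2
    rw [map_add, this, zero_add]
  · intro x; ext; simp
  · intro y; ext; simp


theorem nat_card_sigma {ι : Type*} [Fintype ι] (f : ι → Type*) [∀ i, Fintype (f i)] :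
    Nat.card (Σ i, f i) = ∑ i, Nat.card (f i) := by
  simp [Nat.card_eq_fintype_card]

theorem Mpow_entry {A : Type*} [Fintype A] [DecidableEq A]
    (M : Matrix A A ℕ) (hM01 : ∀ g h : A, M g h = 0 ∨ M g h = 1) :
    ∀ (n : ℕ) (g h : A), (M ^ n) g h =
      Nat.card {z : Fin (n + 1) → A // z 0 = g ∧ z (Fin.last n) = h ∧
        ∀ i : Fin n, M (z i.castSucc) (z i.succ) = 1} := by
  intro n
  induction n with
  | zero =>
    intro g h
    rcases eq_or_ne g h with rfl | hgh
    · rw [pow_zero, Matrix.one_apply_eq]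
      symm
      rw [Nat.card_eq_one_iff_unique]
      constructor
      · constructor
        intro z w
        apply Subtype.ext
        funext i
        rw [Fin.fin_one_eq_zero i, z.2.1, w.2.1]
      · exact ⟨⟨fun _ => g, rfl, rfl, fun i => i.elim0⟩⟩
    · rw [pow_zero, Matrix.one_apply_ne hgh]
      symm
      rw [Nat.card_eq_zero]
      left
      constructor
      rintro ⟨z, h0, hl, -⟩
      rw [show Fin.last 0 = 0 from rfl, h0] at hl
      exact hgh hl
  | succ n ih =>
    intro g h
    have key : Nat.card {z : Fin (n + 1 + 1) → A // z 0 = g ∧ z (Fin.last (n+1)) = h ∧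
          ∀ i : Fin (n+1), M (z i.castSucc) (z i.succ) = 1} =
        ∑ k : A, Nat.card {w : Fin (n + 1) → A // (w 0 = g ∧ w (Fin.last n) = k ∧
          ∀ i : Fin n, M (w i.castSucc) (w i.succ) = 1) ∧ M k h = 1} := by
      rw [← nat_card_sigma]
      apply Nat.card_congr
      refine ⟨fun z => ⟨z.1 ((Fin.last n).castSucc), z.1 ∘ Fin.castSucc, ⟨?_, rfl, ?_⟩, ?_⟩,
        fun p => ⟨Fin.snoc p.2.1 h, ?_, ?_, ?_⟩, ?_, ?_⟩
      · show z.1 (Fin.castSucc 0) = g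
        rw [Fin.castSucc_zero]; exact z.2.1
      · intro i
        show M (z.1 i.castSucc.castSucc) (z.1 (Fin.castSucc i.succ)) = 1
        rw [← Fin.succ_castSucc]
        exact z.2.2.2 i.castSucc
      · have := z.2.2.2 (Fin.last n)
        rwa [Fin.succ_last, z.2.2.1] at this
      · show (Fin.snoc p.2.1 h : Fin (n+1+1) → A) (Fin.castSucc (0 : Fin (n+1))) = g
        rw [Fin.snoc_castSucc]
        exact p.2.2.1.1
      · rw [Fin.snoc_last]
      · intro i
        induction i using Fin.lastCases with
        | last =>
          rw [Fin.succ_last, Fin.snoc_last, Fin.snoc_castSucc, p.2.2.1.2.1]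
          exact p.2.2.2
        | cast j =>
          rw [Fin.succ_castSucc, Fin.snoc_castSucc, Fin.snoc_castSucc]
          exact p.2.2.1.2.2 j
      · intro z
        apply Subtype.ext
        show Fin.snoc (z.1 ∘ Fin.castSucc) h = z.1
        funext i
        induction i using Fin.lastCases with
        | last => rw [Fin.snoc_last, z.2.2.1]
        | cast j => rw [Fin.snoc_castSucc]; rfl
      · rintro ⟨k, w, ⟨hw0, hwl, hwt⟩, hkh⟩
        have h1 : (Fin.snoc w h : Fin (n+1+1) → A) ((Fin.last n).castSucc) = k := by
          rw [Fin.snoc_castSucc]; exact hwl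
        refine Sigma.subtype_ext h1 ?_
        funext j
        simp
    rw [pow_succ, Matrix.mul_apply, key]
    apply Finset.sum_congr rfl
    intro k _
    rcases hM01 k h with h0 | h1
    · rw [h0, mul_zero]
      symm
      rw [Nat.card_eq_zero]
      left
      constructor
      rintro ⟨w, -, hw⟩
      exact absurd hw (by simp)
    · rw [h1, mul_one, ih g k]
      apply Nat.card_congr
      exact Equiv.subtypeEquivRight (fun w => ⟨fun hp => ⟨hp, rfl⟩, fun hp => hp.1⟩)



section Helpers

variable {A : Type*} [Fintype A] [DecidableEq A] [AddCommGroup A] (M : Matrix A A ℕ)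

theorem splice (G : AddSubgroup (ℤ → A))
    (hG : (G : Set (ℤ → A)) = {x : ℤ → A | ∀ i : ℤ, M (x i) (x (i + 1)) = 1})
    (hocc : ∀ g : A, ∃ x ∈ (G : Set (ℤ → A)), x 0 = g)
    (a b : A) (hab : M a b = 1) :
    ∃ x ∈ (G : Set (ℤ → A)), x 0 = a ∧ x 1 = b := by
  obtain ⟨x, hx, hx0⟩ := hocc a
  obtain ⟨y, hy, hy0⟩ := hocc b
  have hx' : ∀ i : ℤ, M (x i) (x (i + 1)) = 1 := by rw [hG] at hx; exact hx
  have hy' : ∀ i : ℤ, M (y i) (y (i + 1)) = 1 := by rw [hG] at hy; exact hy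
  refine ⟨fun i => if i ≤ 0 then x i else y (i - 1), ?_, by simp [hx0], ?_⟩
  · show _ ∈ (G : Set (ℤ → A))
    rw [hG]
    intro i
    dsimp only
    rcases lt_trichotomy i 0 with h | h | h
    · rw [if_pos h.le, if_pos (by omega)]
      exact hx' i
    · subst h
      rw [if_pos le_rfl, if_neg (by omega), hx0]
      simpa [hy0] using hab
    · rw [if_neg (by omega), if_neg (by omega)]
      rw [add_sub_cancel_right]
      have := hy' (i - 1)
      rwa [sub_add_cancel] at this
  · dsimp only
    rw [if_neg (by omega)]
    simpa using hy0

variable (h00 : M 0 0 = 1)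
  (hadd : ∀ a b c d : A, M a b = 1 → M c d = 1 → M (a + c) (b + d) = 1)
  (hneg : ∀ a b : A, M a b = 1 → M (-a) (-b) = 1)

def pathGroup (n : ℕ) : AddSubgroup (Fin (n + 1) → A) where
  carrier := {z | ∀ i : Fin n, M (z i.castSucc) (z i.succ) = 1}
  zero_mem' := fun _ => h00
  add_mem' := fun hz hw i => hadd _ _ _ _ (hz i) (hw i)
  neg_mem' := fun hz i => hneg _ _ (hz i)

theorem card_pathGroup (hsucc : ∀ g : A, ∃ h : A, M g h = 1) (n : ℕ) :
    Nat.card (pathGroup M h00 hadd hneg n) =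
      Fintype.card A * (Nat.card {h : A // M 0 h = 1}) ^ n := by
  induction n with
  | zero =>
    rw [pow_zero, mul_one, ← Nat.card_eq_fintype_card]
    apply Nat.card_congr
    exact ⟨fun z => z.1 0, fun a => ⟨fun _ => a, fun i => i.elim0⟩,
      fun z => Subtype.ext (funext fun i => by rw [Fin.fin_one_eq_zero i]),
      fun a => rfl⟩
  | succ n ih =>
    set P := pathGroup M h00 hadd hneg (n + 1)
    set Q := pathGroup M h00 hadd hneg n
    let res : P →+ Q := AddMonoidHom.mk' (fun z => ⟨z.1 ∘ Fin.castSucc, fun i => by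
        have := z.2 i.castSucc
        rwa [Fin.succ_castSucc] at this⟩)
      (fun z w => rfl)
    have hsur : Function.Surjective res := by
      rintro ⟨w, hw⟩
      obtain ⟨v, hv⟩ := hsucc (w (Fin.last n))
      refine ⟨⟨Fin.snoc w v, ?_⟩, ?_⟩
      · intro i
        induction i using Fin.lastCases with
        | last => rw [Fin.succ_last, Fin.snoc_last, Fin.snoc_castSucc]; exact hv
        | cast j => rw [Fin.succ_castSucc, Fin.snoc_castSucc, Fin.snoc_castSucc]; exact hw j
      · refine Subtype.ext (funext fun i => ?_)
        show (Fin.snoc w v : Fin (n+1+1) → A) i.castSucc = w i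
        exact Fin.snoc_castSucc ..
    have hker : Nat.card res.ker = Nat.card {h : A // M 0 h = 1} := by
      apply Nat.card_congr
      refine ⟨fun z => ⟨z.1.1 (Fin.last (n + 1)), ?_⟩,
        fun v => ⟨⟨Fin.snoc 0 v.1, ?_⟩, ?_⟩, ?_, ?_⟩
      · have h1 := z.1.2 (Fin.last n)
        have h2 : z.1.1 ((Fin.last n).castSucc) = 0 := by
          have h3 : (res z.1).1 = 0 := congrArg Subtype.val z.2
          exact congrFun h3 (Fin.last n)
        rwa [Fin.succ_last, h2] at h1
      · intro i
        induction i using Fin.lastCases with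
        | last =>
          rw [Fin.succ_last, Fin.snoc_last, Fin.snoc_castSucc]
          have : (0 : Fin (n+1) → A) (Fin.last n) = 0 := rfl
          rw [this]
          exact v.2
        | cast j =>
          rw [Fin.succ_castSucc, Fin.snoc_castSucc, Fin.snoc_castSucc]
          exact h00
      · show res _ = 0
        refine Subtype.ext (funext fun i => ?_)
        show (Fin.snoc 0 v.1 : Fin (n+1+1) → A) i.castSucc = (0 : Fin (n+1) → A) i
        exact Fin.snoc_castSucc ..
      · rintro ⟨⟨z, hz⟩, hzk⟩
        apply Subtype.ext
        apply Subtype.ext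
        funext i
        show (Fin.snoc 0 (z (Fin.last (n+1))) : Fin (n+1+1) → A) i = z i
        induction i using Fin.lastCases with
        | last => rw [Fin.snoc_last]
        | cast j =>
          rw [Fin.snoc_castSucc]
          have h3 : (res ⟨z, hz⟩).1 = 0 := congrArg Subtype.val hzk
          exact (congrFun h3 j).symm
      · intro v
        apply Subtype.ext
        show (Fin.snoc 0 v.1 : Fin (n+1+1) → A) (Fin.last (n+1)) = v.1
        exact Fin.snoc_last ..
    rw [card_eq_mul_card_ker res hsur, hker, ih, pow_succ]
    ring

end Helpers


theorem pow_entry_pos {A : Type*} [Fintype A] [DecidableEq A] [AddCommGroup A]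
    (M : Matrix A A ℕ) (h00 : M 0 0 = 1) (r : ℕ)
    (hrfull : ∀ h : A, 0 < (M ^ r) 0 h) (n : ℕ) (hn : r ≤ n) :
    ∀ h : A, 0 < (M ^ n) 0 h := by
  have diag : ∀ m : ℕ, 0 < (M ^ m) 0 (0 : A) := by
    intro m
    induction m with
    | zero => simp [Matrix.one_apply_eq]
    | succ m ih =>
      rw [pow_succ, Matrix.mul_apply]
      calc 0 < (M ^ m) 0 0 * M 0 0 := by rw [h00, mul_one]; exact ih
        _ ≤ ∑ k, (M ^ m) 0 k * M k 0 :=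
          Finset.single_le_sum (f := fun k : A => (M ^ m) 0 k * M k 0)
            (fun i _ => Nat.zero_le _) (Finset.mem_univ (0 : A))
  intro h
  obtain ⟨m, rfl⟩ : ∃ m, n = m + r := ⟨n - r, by omega⟩
  rw [pow_add, Matrix.mul_apply]
  calc 0 < (M ^ m) 0 0 * (M ^ r) 0 h := Nat.mul_pos (diag m) (hrfull h)
    _ ≤ ∑ k, (M ^ m) 0 k * (M ^ r) k h :=
      Finset.single_le_sum (f := fun k : A => (M ^ m) 0 k * (M ^ r) k h)
        (fun i _ => Nat.zero_le _) (Finset.mem_univ (0 : A))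


/-- For a transitive Markov subgroup `G ⊆ A^ℤ` with incidence
matrix `M`, with `r` the smallest `n ≥ 1` such that `F^n(0) = A`: for every
`n ≥ r` and all `g, h ∈ A`, the number of `M`-paths of length `n` from `g` to
`h` equals `|C^n(g,h)| = |F|^n / |A|`; in particular `|A|` divides `|F|^n` and
all entries of `M^n` are equal. -/
theorem path_counts_uniform
    {A : Type*} [Fintype A] [DecidableEq A] [AddCommGroup A]
    (M : Matrix A A ℕ) (hM01 : ∀ g h : A, M g h = 0 ∨ M g h = 1)
    (G : AddSubgroup (ℤ → A))
    (hG : (G : Set (ℤ → A)) = {x : ℤ → A | ∀ i : ℤ, M (x i) (x (i + 1)) = 1})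
    (hocc : ∀ g : A, ∃ x ∈ (G : Set (ℤ → A)), x 0 = g)
    (r : ℕ) (hr1 : 1 ≤ r) (hrfull : ∀ h : A, 0 < (M ^ r) 0 h)
    (hrmin : ∀ n : ℕ, 1 ≤ n → (∀ h : A, 0 < (M ^ n) 0 h) → r ≤ n)
    (n : ℕ) (hn : r ≤ n) :
    (Fintype.card A ∣ (Nat.card {h : A // M 0 h = 1}) ^ n) ∧
    (∀ g h : A,
      Nat.card {z : Fin (n + 1) → A // z 0 = g ∧ z (Fin.last n) = h ∧
          ∀ i : Fin n, M (z i.castSucc) (z i.succ) = 1} =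
        (Nat.card {h : A // M 0 h = 1}) ^ n / Fintype.card A) ∧
    (∀ g h g' h' : A, (M ^ n) g h = (M ^ n) g' h') := by
  have h00 : M 0 0 = 1 := by
    have h0G : (0 : ℤ → A) ∈ (G : Set (ℤ → A)) := G.zero_mem
    rw [hG] at h0G
    simpa using h0G 0
  have hadd : ∀ a b c d : A, M a b = 1 → M c d = 1 → M (a + c) (b + d) = 1 := by
    intro a b c d hab hcd
    obtain ⟨x, hx, hx0, hx1⟩ := splice M G hG hocc a b hab
    obtain ⟨y, hy, hy0, hy1⟩ := splice M G hG hocc c d hcd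
    have hxy : x + y ∈ (G : Set (ℤ → A)) := G.add_mem hx hy
    rw [hG] at hxy
    simpa [hx0, hx1, hy0, hy1] using hxy 0
  have hneg : ∀ a b : A, M a b = 1 → M (-a) (-b) = 1 := by
    intro a b hab
    obtain ⟨x, hx, hx0, hx1⟩ := splice M G hG hocc a b hab
    have hxn : -x ∈ (G : Set (ℤ → A)) := G.neg_mem hx
    rw [hG] at hxn
    simpa [hx0, hx1] using hxn 0
  have hsucc : ∀ g : A, ∃ h : A, M g h = 1 := by
    intro g
    obtain ⟨x, hx, hx0⟩ := hocc g
    rw [hG] at hx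
    exact ⟨x 1, by simpa [hx0] using hx 0⟩
  have hpos : ∀ h : A, 0 < (M ^ n) 0 h := pow_entry_pos M h00 r hrfull n hn
  set f := Nat.card {h : A // M 0 h = 1} with hf
  set P := pathGroup M h00 hadd hneg n with hP
  let ep : P →+ A × A :=
    AddMonoidHom.mk' (fun p => (p.1 0, p.1 (Fin.last n))) (fun p q => rfl)
  have hsur : Function.Surjective ep := by
    rintro ⟨g, h⟩
    obtain ⟨x, hx, hx0⟩ := hocc g
    have hx' : ∀ i : ℤ, M (x i) (x (i + 1)) = 1 := by rw [hG] at hx; exact hx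
    have hzmem : (fun i : Fin (n + 1) => x ((i : ℕ) : ℤ)) ∈ P := by
      intro i
      show M (x ((i.castSucc : ℕ) : ℤ)) (x ((i.succ : ℕ) : ℤ)) = 1
      have e1 : ((i.castSucc : ℕ) : ℤ) = ((i : ℕ) : ℤ) := by
        rw [Fin.coe_castSucc]
      have e2 : ((i.succ : ℕ) : ℤ) = ((i : ℕ) : ℤ) + 1 := by
        rw [Fin.val_succ]; push_cast; ring
      rw [e1, e2]
      exact hx' _
    have h2 : 0 < (M ^ n) 0 (h - x ((n : ℕ) : ℤ)) := hpos _
    rw [Mpow_entry M hM01 n 0 (h - x ((n : ℕ) : ℤ))] at h2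
    obtain ⟨⟨w, hw0, hwl, hwt⟩⟩ := (Nat.card_pos_iff.mp h2).1
    refine ⟨⟨fun i : Fin (n + 1) => x ((i : ℕ) : ℤ), hzmem⟩ + ⟨w, hwt⟩, ?_⟩
    show (x (((0 : Fin (n+1)) : ℕ) : ℤ) + w 0,
          x (((Fin.last n : Fin (n+1)) : ℕ) : ℤ) + w (Fin.last n)) = (g, h)
    rw [Prod.mk.injEq]
    constructor
    · rw [hw0, add_zero, show (((0 : Fin (n+1)) : ℕ) : ℤ) = 0 by simp, hx0]
    · rw [hwl, show ((Fin.last n : Fin (n+1)) : ℕ) = n from Fin.val_last n,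
        add_sub_cancel]
  have hcardP : Nat.card P = Fintype.card A * f ^ n :=
    card_pathGroup M h00 hadd hneg hsucc n
  have hAA : Nat.card (A × A) = Fintype.card A * Fintype.card A := by
    simp [Nat.card_eq_fintype_card]
  have hA0 : 0 < Fintype.card A := Fintype.card_pos
  have heq : Fintype.card A * f ^ n =
      Fintype.card A * (Fintype.card A * Nat.card ep.ker) := by
    rw [← hcardP, card_eq_mul_card_ker ep hsur, hAA, mul_assoc]
  have hmain : f ^ n = Fintype.card A * Nat.card ep.ker :=
    Nat.eq_of_mul_eq_mul_left hA0 heq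
  have hker_eq : Nat.card ep.ker = f ^ n / Fintype.card A := by
    rw [hmain, Nat.mul_div_cancel_left _ hA0]
  have claim2 : ∀ g h : A,
      Nat.card {z : Fin (n + 1) → A // z 0 = g ∧ z (Fin.last n) = h ∧
        ∀ i : Fin n, M (z i.castSucc) (z i.succ) = 1} = f ^ n / Fintype.card A := by
    intro g h
    obtain ⟨p₀, hp₀⟩ := hsur (g, h)
    have e : {z : Fin (n + 1) → A // z 0 = g ∧ z (Fin.last n) = h ∧
        ∀ i : Fin n, M (z i.castSucc) (z i.succ) = 1} ≃ {p : P // ep p = ep p₀} := by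
      refine ⟨fun z => ⟨⟨z.1, z.2.2.2⟩, ?_⟩, fun p => ⟨p.1.1, ?_, ?_, p.1.2⟩, ?_, ?_⟩
      · rw [hp₀]
        show (z.1 0, z.1 (Fin.last n)) = (g, h)
        rw [z.2.1, z.2.2.1]
      · exact congrArg Prod.fst (p.2.trans hp₀)
      · exact congrArg Prod.snd (p.2.trans hp₀)
      · intro z; rfl
      · intro p
        apply Subtype.ext
        apply Subtype.ext
        rfl
    rw [Nat.card_congr e, card_fiber_eq_card_ker ep p₀, hker_eq]
  refine ⟨⟨Nat.card ep.ker, hmain⟩, claim2, ?_⟩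
  intro g h g' h'
  rw [Mpow_entry M hM01 n g h, Mpow_entry M hM01 n g' h', claim2 g h, claim2 g' h']
end

section
/- For every ℓ ≥ 1, the set G_ℓ of M-admissible words of length ℓ is a subgroup of the direct product A^ℓ and has cardinality |G_ℓ| = |A|·|F|^{ℓ−1}. -/
section Aux

variable {A : Type*} [Fintype A] [DecidableEq A] [AddCommGroup A] (M : Matrix A A ℕ)

/-- Any admissible edge extends to a bi-infinite admissible sequence. -/
lemma aux_extend (hsucc : ∀ g : A, ∃ h, M g h = 1) (hpred : ∀ g : A, ∃ h, M h g = 1)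
    (g h : A) (hgh : M g h = 1) :
    ∃ x : ℤ → A, x 0 = g ∧ x 1 = h ∧ ∀ i : ℤ, M (x i) (x (i + 1)) = 1 := by
  classical
  set s : A → A := fun a => (hsucc a).choose with hs
  have hsspec : ∀ a, M a (s a) = 1 := fun a => (hsucc a).choose_spec
  set p : A → A := fun a => (hpred a).choose with hp
  have hpspec : ∀ a, M (p a) a = 1 := fun a => (hpred a).choose_spec
  refine ⟨fun i => if 1 ≤ i then s^[(i - 1).toNat] h else p^[(-i).toNat] g, ?_, ?_, ?_⟩
  · simp
  · simp
  · intro i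
    by_cases h1 : 1 ≤ i
    · have h2 : 1 ≤ i + 1 := by omega
      have h3 : (i + 1 - 1).toNat = (i - 1).toNat + 1 := by omega
      simp only [h1, h2, if_pos, h3, Function.iterate_succ_apply']
      exact hsspec _
    · by_cases h0 : i = 0
      · subst h0; simpa using hgh
      · have h2 : ¬ (1 ≤ i + 1) := by omega
        have h3 : (-i).toNat = (-(i + 1)).toNat + 1 := by omega
        simp only [h1, h2, if_neg, not_false_iff, h3, Function.iterate_succ_apply']
        exact hpspec _

/-- All out-neighbour sets have the same cardinality as `F = F(0)`. -/
lemma aux_fiber_card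
    (hadd : ∀ g h g' h' : A, M g h = 1 → M g' h' = 1 → M (g + g') (h + h') = 1)
    (hneg : ∀ g h : A, M g h = 1 → M (-g) (-h) = 1)
    (g h0 : A) (hg : M g h0 = 1) :
    Nat.card {h : A // M g h = 1} = Nat.card {h : A // M 0 h = 1} := by
  refine Nat.card_congr ?_
  refine
    { toFun := fun x => ⟨x.1 - h0, ?_⟩
      invFun := fun y => ⟨h0 + y.1, ?_⟩
      left_inv := fun x => Subtype.ext (by simp)
      right_inv := fun y => Subtype.ext (by simp) }
  · have := hadd g x.1 (-g) (-h0) x.2 (hneg _ _ hg)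
    simpa [sub_eq_add_neg] using this
  · have := hadd g h0 0 y.1 hg y.2
    simpa using this

lemma aux_snoc (n : ℕ) (w' : Fin (n + 1) → A)
    (hw' : ∀ i j : Fin (n + 1), (j : ℕ) = (i : ℕ) + 1 → M (w' i) (w' j) = 1)
    (h : A) (hh : M (w' (Fin.last n)) h = 1) :
    ∀ i j : Fin (n + 2), (j : ℕ) = (i : ℕ) + 1 →
      M ((Fin.snoc w' h : Fin (n + 2) → A) i) ((Fin.snoc w' h : Fin (n + 2) → A) j) = 1 := by
  intro i j hij
  rcases Fin.eq_castSucc_or_eq_last j with ⟨j', rfl⟩ | rfl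
  · have hi : (i : ℕ) < n + 1 := by
      have := j'.isLt; simp at hij; omega
    have hieq : i = (⟨(i : ℕ), hi⟩ : Fin (n + 1)).castSucc := by
      apply Fin.ext; simp
    rw [hieq, Fin.snoc_castSucc, Fin.snoc_castSucc]
    exact hw' _ _ (by simpa using hij)
  · have hi : i = (Fin.last n).castSucc := by
      apply Fin.ext; simp at hij ⊢; omega
    rw [hi, Fin.snoc_castSucc, Fin.snoc_last]
    exact hh

lemma aux_count
    (hzero : M 0 0 = 1)
    (hadd : ∀ g h g' h' : A, M g h = 1 → M g' h' = 1 → M (g + g') (h + h') = 1)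
    (hneg : ∀ g h : A, M g h = 1 → M (-g) (-h) = 1)
    (hsucc : ∀ g : A, ∃ h, M g h = 1) :
    ∀ n : ℕ,
      Nat.card {w : Fin (n + 1) → A //
          ∀ i j : Fin (n + 1), (j : ℕ) = (i : ℕ) + 1 → M (w i) (w j) = 1} =
        Fintype.card A * (Nat.card {h : A // M 0 h = 1}) ^ n := by
  classical
  intro n
  induction n with
  | zero =>
    have e : {w : Fin 1 → A // ∀ i j : Fin 1, (j : ℕ) = (i : ℕ) + 1 → M (w i) (w j) = 1}
        ≃ (Fin 1 → A) :=
      Equiv.subtypeUnivEquiv (fun w i j hij => by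
        have := i.isLt; have := j.isLt; omega)
    rw [Nat.card_congr e, Nat.card_eq_fintype_card]
    simp [Fintype.card_fun]
  | succ n ih =>
    set F := Nat.card {h : A // M 0 h = 1} with hF
    have e : {w : Fin (n + 2) → A //
          ∀ i j : Fin (n + 2), (j : ℕ) = (i : ℕ) + 1 → M (w i) (w j) = 1}
        ≃ Σ w : {w : Fin (n + 1) → A //
            ∀ i j : Fin (n + 1), (j : ℕ) = (i : ℕ) + 1 → M (w i) (w j) = 1},
            {h : A // M (w.1 (Fin.last n)) h = 1} :=
      { toFun := fun w =>
          ⟨⟨Fin.init w.1, fun i j hij =>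
            w.2 i.castSucc j.castSucc (by simpa using hij)⟩,
           ⟨w.1 (Fin.last (n + 1)),
            w.2 ((Fin.last n).castSucc) (Fin.last (n + 1)) (by simp)⟩⟩
        invFun := fun q => ⟨Fin.snoc q.1.1 q.2.1, aux_snoc M n q.1.1 q.1.2 q.2.1 q.2.2⟩
        left_inv := fun w => Subtype.ext (Fin.snoc_init_self w.1)
        right_inv := by
          rintro ⟨⟨w', hw'⟩, h, hh⟩
          refine Sigma.ext (Subtype.ext (by simp)) ?_
          refine (Subtype.heq_iff_coe_eq ?_).2 (by simp)
          intro x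
          simp }
    rw [Nat.card_congr e, Nat.card_eq_fintype_card, Fintype.card_sigma]
    have hfib : ∀ w : {w : Fin (n + 1) → A //
        ∀ i j : Fin (n + 1), (j : ℕ) = (i : ℕ) + 1 → M (w i) (w j) = 1},
        Fintype.card {h : A // M (w.1 (Fin.last n)) h = 1} = F := by
      intro w
      rw [← Nat.card_eq_fintype_card, hF]
      exact aux_fiber_card M hadd hneg _ _ (hsucc (w.1 (Fin.last n))).choose_spec
    calc (∑ w : {w : Fin (n + 1) → A //
        ∀ i j : Fin (n + 1), (j : ℕ) = (i : ℕ) + 1 → M (w i) (w j) = 1},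
          Fintype.card {h : A // M (w.1 (Fin.last n)) h = 1})
        = ∑ _w : {w : Fin (n + 1) → A //
            ∀ i j : Fin (n + 1), (j : ℕ) = (i : ℕ) + 1 → M (w i) (w j) = 1}, F := by
          exact Finset.sum_congr rfl fun w _ => hfib w
      _ = Fintype.card {w : Fin (n + 1) → A //
            ∀ i j : Fin (n + 1), (j : ℕ) = (i : ℕ) + 1 → M (w i) (w j) = 1} * F := by
          rw [Finset.sum_const, smul_eq_mul, Finset.card_univ]
      _ = Fintype.card A * F ^ (n + 1) := by
          rw [← Nat.card_eq_fintype_card, ih, pow_succ, mul_assoc]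

end Aux

/-- For a Markov subgroup `G ⊆ A^ℤ` with incidence matrix `M`,
for every `ℓ ≥ 1` the set `G_ℓ` of `M`-admissible words of length `ℓ` is a
subgroup of the direct product `A^ℓ` and `|G_ℓ| = |A| · |F|^(ℓ-1)`. -/
theorem admissible_words_subgroup_card
    {A : Type*} [Fintype A] [DecidableEq A] [AddCommGroup A]
    (M : Matrix A A ℕ) (hM01 : ∀ g h : A, M g h = 0 ∨ M g h = 1)
    (G : AddSubgroup (ℤ → A))
    (hG : (G : Set (ℤ → A)) = {x : ℤ → A | ∀ i : ℤ, M (x i) (x (i + 1)) = 1})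
    (hocc : ∀ g : A, ∃ x ∈ (G : Set (ℤ → A)), x 0 = g)
    (ℓ : ℕ) (hℓ : 1 ≤ ℓ) :
    (∃ H : AddSubgroup (Fin ℓ → A), (H : Set (Fin ℓ → A)) =
      {w : Fin ℓ → A | ∀ i j : Fin ℓ, (j : ℕ) = (i : ℕ) + 1 → M (w i) (w j) = 1}) ∧
    Nat.card {w : Fin ℓ → A // ∀ i j : Fin ℓ, (j : ℕ) = (i : ℕ) + 1 → M (w i) (w j) = 1} =
      Fintype.card A * (Nat.card {h : A // M 0 h = 1}) ^ (ℓ - 1) := by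
  classical
  have hmemiff : ∀ x : ℤ → A, x ∈ G ↔ ∀ i : ℤ, M (x i) (x (i + 1)) = 1 := by
    intro x
    constructor
    · intro hx
      have : x ∈ (G : Set (ℤ → A)) := hx
      rw [hG] at this; exact this
    · intro hx
      have : x ∈ (G : Set (ℤ → A)) := by rw [hG]; exact hx
      exact this
  have hsucc : ∀ g : A, ∃ h, M g h = 1 := by
    intro g
    obtain ⟨x, hx, hx0⟩ := hocc g
    have hx' : x ∈ G := hx
    have := (hmemiff x).1 hx' 0
    exact ⟨x 1, by rw [← hx0]; simpa using this⟩
  have hpred : ∀ g : A, ∃ h, M h g = 1 := by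
    intro g
    obtain ⟨x, hx, hx0⟩ := hocc g
    have hx' : x ∈ G := hx
    have := (hmemiff x).1 hx' (-1)
    exact ⟨x (-1), by rw [← hx0]; simpa using this⟩
  -- any admissible edge lies in some point of G
  have hedge : ∀ g h : A, M g h = 1 → ∃ x ∈ G, x 0 = g ∧ x 1 = h := by
    intro g h hgh
    obtain ⟨x, hx0, hx1, hadm⟩ := aux_extend M hsucc hpred g h hgh
    exact ⟨x, (hmemiff x).2 hadm, hx0, hx1⟩
  have hzero : M (0 : A) 0 = 1 := by
    have h0 : (0 : ℤ → A) ∈ G := zero_mem G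
    have := (hmemiff 0).1 h0 0
    simpa using this
  have hadd : ∀ g h g' h' : A, M g h = 1 → M g' h' = 1 → M (g + g') (h + h') = 1 := by
    intro g h g' h' h1 h2
    obtain ⟨x, hxG, hx0, hx1⟩ := hedge g h h1
    obtain ⟨y, hyG, hy0, hy1⟩ := hedge g' h' h2
    have := (hmemiff (x + y)).1 (add_mem hxG hyG) 0
    simp only [Pi.add_apply] at this
    rw [hx0, hy0] at this
    simpa [hx1, hy1] using this
  have hneg : ∀ g h : A, M g h = 1 → M (-g) (-h) = 1 := by
    intro g h h1
    obtain ⟨x, hxG, hx0, hx1⟩ := hedge g h h1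
    have := (hmemiff (-x)).1 (neg_mem hxG) 0
    simp only [Pi.neg_apply] at this
    rw [hx0] at this
    simpa [hx1] using this
  constructor
  · refine ⟨⟨⟨⟨{w : Fin ℓ → A | ∀ i j : Fin ℓ, (j : ℕ) = (i : ℕ) + 1 → M (w i) (w j) = 1},
        fun ha hb i j hij => by
          simpa using hadd _ _ _ _ (ha i j hij) (hb i j hij)⟩,
        fun i j _ => by simpa using hzero⟩,
        fun ha i j hij => by simpa using hneg _ _ (ha i j hij)⟩, rfl⟩
  · obtain ⟨n, rfl⟩ : ∃ n, ℓ = n + 1 := ⟨ℓ - 1, by omega⟩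
    simpa using aux_count M hzero hadd hneg hsucc n
end

section
/- Let ν be the Haar probability measure of the compact abelian group G (a closed subgroup of the compact group A^ℤ). Then for every ℓ ≥ 1 and every admissible word g = (g_0,…,g_{ℓ−1}) ∈ G_ℓ, the cylinder set has measure ν({x ∈ G : x_i = g_i for 0 ≤ i ≤ ℓ−1}) = 1/(|A|·|F|^{ℓ−1}). -/
set_option linter.unusedSectionVars false

section Aux
variable {A : Type*} [Fintype A] [DecidableEq A] [AddCommGroup A]
variable (M : Matrix A A ℕ) (G : AddSubgroup (ℤ → A))

/-- Every admissible word extends to a point of `G`. -/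
theorem ext_word
    (hG : (G : Set (ℤ → A)) = {x : ℤ → A | ∀ i : ℤ, M (x i) (x (i + 1)) = 1})
    (hocc : ∀ g : A, ∃ x ∈ (G : Set (ℤ → A)), x 0 = g)
    {ℓ : ℕ} (hℓ : 1 ≤ ℓ) (w : Fin ℓ → A)
    (hw : ∀ i j : Fin ℓ, (j : ℕ) = (i : ℕ) + 1 → M (w i) (w j) = 1) :
    ∃ x ∈ (G : Set (ℤ → A)), ∀ i : Fin ℓ, x (i : ℤ) = w i := by
  have hmem : ∀ x, x ∈ (G : Set (ℤ → A)) → ∀ i : ℤ, M (x i) (x (i + 1)) = 1 := by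
    intro x hx
    rw [hG] at hx; exact hx
  have hsucc : ∀ a : A, ∃ b, M a b = 1 := by
    intro a
    obtain ⟨x, hx, hx0⟩ := hocc a
    exact ⟨x 1, by have := hmem x hx 0; rwa [hx0] at this⟩
  have hpred : ∀ a : A, ∃ b, M b a = 1 := by
    intro a
    obtain ⟨x, hx, hx0⟩ := hocc a
    refine ⟨x (-1), ?_⟩
    have := hmem x hx (-1)
    norm_num at this
    rwa [hx0] at this
  choose s hs using hsucc
  choose p hp using hpred
  set L := ℓ - 1 with hL
  set a := w ⟨L, by omega⟩ with ha
  set b := w ⟨0, by omega⟩ with hb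
  set r : ℕ → A := fun n => if h : n < ℓ then w ⟨n, h⟩ else s^[n - L] a with hrdef
  have hr2 : ∀ n, L ≤ n → r n = s^[n - L] a := by
    intro n hn
    by_cases h : n < ℓ
    · have : n = L := by omega
      subst this
      simp [hrdef, h, ha]
    · simp [hrdef, h]
  have hr : ∀ n, M (r n) (r (n + 1)) = 1 := by
    intro n
    by_cases h : n + 1 < ℓ
    · have h' : n < ℓ := by omega
      have := hw ⟨n, h'⟩ ⟨n + 1, h⟩ rfl
      simpa [hrdef, h, h'] using this
    · have h1 : L ≤ n := by omega
      have h2 : r (n + 1) = s (r n) := by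
        rw [hr2 n h1, hr2 (n + 1) (by omega)]
        have : n + 1 - L = (n - L) + 1 := by omega
        rw [this, Function.iterate_succ_apply']
      rw [h2]; exact hs _
  set q : ℕ → A := fun n => p^[n] b with hqdef
  have hq : ∀ n, M (q (n + 1)) (q n) = 1 := by
    intro n
    have : q (n + 1) = p (q n) := Function.iterate_succ_apply' p n b
    rw [this]; exact hp _
  set x : ℤ → A := fun i => if 0 ≤ i then r i.toNat else q (-i).toNat with hxdef
  have hq0 : q 0 = r 0 := by
    simp only [hqdef, hrdef, Function.iterate_zero, id]
    rw [dif_pos (by omega : 0 < ℓ)]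
  have hxG : x ∈ (G : Set (ℤ → A)) := by
    rw [hG]
    intro i
    by_cases h0 : 0 ≤ i
    · have h1 : (0:ℤ) ≤ i + 1 := by omega
      have h2 : (i + 1).toNat = i.toNat + 1 := by omega
      simp only [hxdef, h0, h1, if_true, h2]
      exact hr _
    · have hneg : i < 0 := by omega
      have h2 : (-i).toNat = (-(i + 1)).toNat + 1 := by omega
      by_cases h1 : 0 ≤ i + 1
      · have h3 : i + 1 = 0 := by omega
        have h4 : (-(i+1)).toNat = 0 := by omega
        simp only [hxdef, h0, if_false, h1, if_true, h2, h4, h3]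
        rw [show ((0:ℤ).toNat) = 0 from rfl, ← hq0]
        exact hq 0
      · simp only [hxdef, h0, if_false, h1, h2]
        exact hq _
  refine ⟨x, hxG, ?_⟩
  intro i
  have h0 : (0:ℤ) ≤ (i : ℤ) := Int.natCast_nonneg _
  have h1 : ((i:ℤ)).toNat = (i : ℕ) := by omega
  have h2 : (i : ℕ) < ℓ := i.2
  simp only [hxdef, h0, if_true, h1, hrdef, h2, dif_pos]

theorem edge_realize
    (hG : (G : Set (ℤ → A)) = {x : ℤ → A | ∀ i : ℤ, M (x i) (x (i + 1)) = 1})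
    (hocc : ∀ g : A, ∃ x ∈ (G : Set (ℤ → A)), x 0 = g)
    {a b : A} (hab : M a b = 1) :
    ∃ x ∈ (G : Set (ℤ → A)), x 0 = a ∧ x 1 = b := by
  obtain ⟨x, hx, hco⟩ := ext_word M G hG hocc (ℓ := 2) (by norm_num) ![a, b]
    (by
      intro i j hij
      fin_cases i <;> fin_cases j <;> simp_all)
  refine ⟨x, hx, ?_, ?_⟩
  · have := hco 0; simpa using this
  · have := hco 1; simpa using this

theorem edge_add
    (hG : (G : Set (ℤ → A)) = {x : ℤ → A | ∀ i : ℤ, M (x i) (x (i + 1)) = 1})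
    (hocc : ∀ g : A, ∃ x ∈ (G : Set (ℤ → A)), x 0 = g)
    {g h a b : A} (h1 : M g a = 1) (h2 : M h b = 1) : M (g + h) (a + b) = 1 := by
  obtain ⟨x, hx, hx0, hx1⟩ := edge_realize M G hG hocc h1
  obtain ⟨y, hy, hy0, hy1⟩ := edge_realize M G hG hocc h2
  have hxy : x + y ∈ (G : Set (ℤ → A)) := G.add_mem hx hy
  rw [hG] at hxy
  have := hxy 0
  norm_num [Pi.add_apply, hx0, hx1, hy0, hy1] at this
  exact this

theorem edge_neg
    (hG : (G : Set (ℤ → A)) = {x : ℤ → A | ∀ i : ℤ, M (x i) (x (i + 1)) = 1})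
    (hocc : ∀ g : A, ∃ x ∈ (G : Set (ℤ → A)), x 0 = g)
    {g a : A} (h1 : M g a = 1) : M (-g) (-a) = 1 := by
  obtain ⟨x, hx, hx0, hx1⟩ := edge_realize M G hG hocc h1
  have hxy : -x ∈ (G : Set (ℤ → A)) := G.neg_mem hx
  rw [hG] at hxy
  have := hxy 0
  norm_num [Pi.neg_apply, hx0, hx1] at this
  exact this

theorem M_zero_zero
    (hG : (G : Set (ℤ → A)) = {x : ℤ → A | ∀ i : ℤ, M (x i) (x (i + 1)) = 1}) :
    M 0 0 = 1 := by
  have h0 : (0 : ℤ → A) ∈ (G : Set (ℤ → A)) := G.zero_mem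
  rw [hG] at h0
  simpa using h0 0

/-- Follower sets are cosets of `F(0)`, hence have the same cardinality. -/
theorem card_follower
    (hG : (G : Set (ℤ → A)) = {x : ℤ → A | ∀ i : ℤ, M (x i) (x (i + 1)) = 1})
    (hocc : ∀ g : A, ∃ x ∈ (G : Set (ℤ → A)), x 0 = g)
    {g c : A} (hc : M g c = 1) :
    Nat.card {h : A // M g h = 1} = Nat.card {h : A // M 0 h = 1} := by
  refine Nat.card_congr (Equiv.symm ?_)
  refine ⟨fun f => ⟨c + f.1, ?_⟩, fun h => ⟨-c + h.1, ?_⟩, ?_, ?_⟩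
  · have := edge_add M G hG hocc hc f.2
    simpa using this
  · have := edge_add M G hG hocc (edge_neg M G hG hocc hc) h.2
    simpa using this
  · intro f; ext; simp
  · intro h; ext; simp

/-- Restriction to coordinates `0,…,ℓ-1` as an additive homomorphism. -/
def restr (ℓ : ℕ) : (ℤ → A) →+ (Fin ℓ → A) :=
  AddMonoidHom.mk' (fun x i => x (i : ℤ)) (fun _ _ => rfl)

@[simp] theorem restr_apply (ℓ : ℕ) (x : ℤ → A) (i : Fin ℓ) :
    restr ℓ x i = x (i : ℤ) := rfl

theorem card_image
    (hG : (G : Set (ℤ → A)) = {x : ℤ → A | ∀ i : ℤ, M (x i) (x (i + 1)) = 1})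
    (hocc : ∀ g : A, ∃ x ∈ (G : Set (ℤ → A)), x 0 = g)
    {ℓ : ℕ} (hℓ : 1 ≤ ℓ) :
    Nat.card (G.map (restr ℓ)) =
      Fintype.card A * (Nat.card {h : A // M 0 h = 1}) ^ (ℓ - 1) := by
  induction ℓ, hℓ using Nat.le_induction with
  | base =>
    have htop : G.map (restr 1) = ⊤ := by
      rw [AddSubgroup.eq_top_iff']
      intro v
      obtain ⟨x, hx, hx0⟩ := hocc (v 0)
      refine ⟨x, hx, ?_⟩
      funext i
      have : i = 0 := Subsingleton.elim i 0
      subst this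
      simpa using hx0
    rw [htop, AddSubgroup.card_top]
    simp [Nat.card_eq_fintype_card]
  | succ ℓ hℓ ih =>
    set F := {h : A // M 0 h = 1} with hF
    let ρ : (Fin (ℓ + 1) → A) →+ (Fin ℓ → A) :=
      AddMonoidHom.mk' (fun v i => v i.castSucc) (fun _ _ => rfl)
    set H := G.map (restr (ℓ + 1)) with hHdef
    let ρ' : ↥H →+ (Fin ℓ → A) := ρ.comp H.subtype
    have hrange : ρ'.range = G.map (restr ℓ) := by
      show (ρ.comp H.subtype).range = _
      rw [AddMonoidHom.range_comp, AddSubgroup.range_subtype, hHdef,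
        AddSubgroup.map_map]
      congr 1
    have hker : Nat.card ρ'.ker = Nat.card F := by
      refine Nat.card_congr ?_
      refine ⟨fun v => ⟨v.1.1 (Fin.last ℓ), ?_⟩, fun f => ⟨⟨?_, ?_⟩, ?_⟩, ?_, ?_⟩
      · -- M 0 (last coordinate) = 1
        obtain ⟨x, hxG, hx⟩ := v.1.2
        have hk : ∀ i : Fin ℓ, v.1.1 i.castSucc = 0 := by
          intro i
          have := v.2
          rw [AddMonoidHom.mem_ker] at this
          exact congrFun this i
        rw [hG] at hxG
        have hM := hxG ((ℓ - 1 : ℕ) : ℤ)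
        have e1 : x ((ℓ - 1 : ℕ) : ℤ) = 0 := by
          have := congrFun hx ((⟨ℓ - 1, by omega⟩ : Fin ℓ).castSucc)
          rw [restr_apply] at this
          have hcoord : (((⟨ℓ - 1, by omega⟩ : Fin ℓ).castSucc : ℕ) : ℤ)
              = ((ℓ - 1 : ℕ) : ℤ) := by simp
          rw [hcoord] at this
          rw [this, hk]
        have e2 : x (((ℓ - 1 : ℕ) : ℤ) + 1) = v.1.1 (Fin.last ℓ) := by
          have := congrFun hx (Fin.last ℓ)
          rw [restr_apply] at this
          have hcoord : (((Fin.last ℓ) : ℕ) : ℤ) = ((ℓ - 1 : ℕ) : ℤ) + 1 := by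
            simp [Fin.val_last]; omega
          rw [hcoord] at this
          exact this
        rwa [e1, e2] at hM
      · exact fun j => if j = Fin.last ℓ then f.1 else 0
      · -- membership in H
        have hadm : ∀ i j : Fin (ℓ + 1), (j : ℕ) = (i : ℕ) + 1 →
            M ((fun j => if j = Fin.last ℓ then f.1 else 0) i)
              ((fun j => if j = Fin.last ℓ then f.1 else 0) j) = 1 := by
          intro i j hij
          have hi : i ≠ Fin.last ℓ := by
            intro h
            have : (i : ℕ) = ℓ := by rw [h]; simp
            have : (j : ℕ) < ℓ + 1 := j.2
            omega
          by_cases hj : j = Fin.last ℓ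
          · simp only [hi, hj, if_true, if_false, if_neg hi]
            exact f.2
          · simp only [if_neg hi, if_neg hj]
            exact M_zero_zero M G hG
        obtain ⟨x, hxG, hco⟩ := ext_word M G hG hocc (by omega)
          (fun j => if j = Fin.last ℓ then f.1 else 0) hadm
        exact ⟨x, hxG, funext fun i => hco i⟩
      · -- in kernel
        rw [AddMonoidHom.mem_ker]
        funext i
        show (if i.castSucc = Fin.last ℓ then f.1 else 0) = 0
        rw [if_neg (Fin.castSucc_lt_last i).ne]
      · -- left inverse
        intro v
        ext j
        show (if j = Fin.last ℓ then v.1.1 (Fin.last ℓ) else 0) = v.1.1 j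
        by_cases hj : j = Fin.last ℓ
        · rw [if_pos hj, hj]
        · rw [if_neg hj]
          obtain ⟨i, rfl⟩ := Fin.exists_castSucc_eq.2 hj
          have := v.2
          rw [AddMonoidHom.mem_ker] at this
          exact (congrFun this i).symm
      · -- right inverse
        intro f
        ext
        show (if Fin.last ℓ = Fin.last ℓ then f.1 else 0) = f.1
        rw [if_pos rfl]
    have hcard : Nat.card ↥H = Nat.card (G.map (restr ℓ)) * Nat.card F := by
      rw [AddSubgroup.card_eq_card_quotient_mul_card_addSubgroup ρ'.ker, hker]
      congr 1
      rw [← hrange]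
      exact Nat.card_congr (QuotientAddGroup.quotientKerEquivRange ρ').toEquiv
    rw [hcard, ih]
    rw [mul_assoc, ← pow_succ]
    congr 2
    omega
end Aux


/-- Let `ν` be the Haar probability measure of the compact
abelian group `G` (i.e. the translation-invariant Borel probability measure on
the Markov subgroup `G`, the Borel σ-algebra of the product topology being the
product σ-algebra generated by the coordinates).  Then for every `ℓ ≥ 1` and
every admissible word `g ∈ G_ℓ`, the cylinder `{x ∈ G : x_i = g_i, 0 ≤ i ≤ ℓ-1}`
has measure `1/(|A|·|F|^(ℓ-1))`. -/
theorem haar_measure_of_cylinder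
    {A : Type*} [Fintype A] [DecidableEq A] [AddCommGroup A]
    [MeasurableSpace A] (hAmeas : ∀ s : Set A, MeasurableSet s)
    (M : Matrix A A ℕ) (hM01 : ∀ g h : A, M g h = 0 ∨ M g h = 1)
    (G : AddSubgroup (ℤ → A))
    (hG : (G : Set (ℤ → A)) = {x : ℤ → A | ∀ i : ℤ, M (x i) (x (i + 1)) = 1})
    (hocc : ∀ g : A, ∃ x ∈ (G : Set (ℤ → A)), x 0 = g)
    (ν : MeasureTheory.Measure ↥G) [MeasureTheory.IsProbabilityMeasure ν]
    (hinv : ∀ g : ↥G, MeasureTheory.Measure.map (fun y : ↥G => g + y) ν = ν)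
    (ℓ : ℕ) (hℓ : 1 ≤ ℓ) (w : Fin ℓ → A)
    (hw : ∀ i j : Fin ℓ, (j : ℕ) = (i : ℕ) + 1 → M (w i) (w j) = 1) :
    ν {x : ↥G | ∀ i : Fin ℓ, (x : ℤ → A) (i : ℤ) = w i} =
      ((Fintype.card A : ENNReal) *
        (Nat.card {h : A // M 0 h = 1} : ENNReal) ^ (ℓ - 1))⁻¹ := by
  classical
  set ψ : ↥G →+ (Fin ℓ → A) := (restr ℓ).comp G.subtype with hψdef
  set Im := G.map (restr ℓ) with hImdef
  have hpsi_mem : ∀ x : ↥G, ψ x ∈ Im := fun x => ⟨x.1, x.2, rfl⟩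
  have hmem_iff : ∀ u : Fin ℓ → A, u ∈ Im → ∃ x : ↥G, ψ x = u := by
    rintro u ⟨x, hx, hxu⟩
    exact ⟨⟨x, hx⟩, hxu⟩
  -- the cylinder as a fiber of ψ
  have hSet : {x : ↥G | ∀ i : Fin ℓ, (x : ℤ → A) (i : ℤ) = w i} = ψ ⁻¹' {w} := by
    ext x
    simp only [Set.mem_setOf_eq, Set.mem_preimage, Set.mem_singleton_iff, funext_iff]
    rfl
  rw [hSet]
  -- measurability
  haveI : MeasurableSingletonClass A := ⟨fun a => hAmeas {a}⟩
  have hmeasψ : Measurable ψ :=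
    measurable_pi_lambda _ fun i =>
      (measurable_pi_apply ((i : ℕ) : ℤ)).comp measurable_subtype_coe
  have hSm : ∀ u : Fin ℓ → A, MeasurableSet (ψ ⁻¹' {u}) := fun u =>
    hmeasψ (measurableSet_singleton u)
  have hTmeas : ∀ g : ↥G, Measurable (fun y : ↥G => g + y) := by
    intro g
    have h1 : Measurable fun y : ↥G => ((g : ℤ → A) + (y : ℤ → A)) := by
      refine measurable_pi_lambda _ fun i => ?_
      have h2 : Measurable fun y : ↥G => (y : ℤ → A) i :=
        (measurable_pi_apply i).comp measurable_subtype_coe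
      have h3 : Measurable fun a : A => (g : ℤ → A) i + a := fun s _ => hAmeas _
      exact h3.comp h2
    exact h1.subtype_mk
  -- translation invariance of fibers
  have key : ∀ (g : ↥G) (u : Fin ℓ → A), ν (ψ ⁻¹' {u}) = ν (ψ ⁻¹' {u - ψ g}) := by
    intro g u
    conv_lhs => rw [← hinv g]
    rw [MeasureTheory.Measure.map_apply (hTmeas g) (hSm u)]
    congr 1
    ext y
    simp only [Set.mem_preimage, Set.mem_singleton_iff, map_add]
    rw [eq_comm, eq_sub_iff_add_eq', eq_comm]
  have hw_mem : w ∈ Im := by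
    obtain ⟨x, hx, hco⟩ := ext_word M G hG hocc hℓ w hw
    exact ⟨x, hx, funext hco⟩
  have const : ∀ u ∈ Im, ν (ψ ⁻¹' {u}) = ν (ψ ⁻¹' {w}) := by
    intro u hu
    obtain ⟨g, hg⟩ := hmem_iff _ (Im.sub_mem hu hw_mem)
    have h := key g u
    rw [hg, sub_sub_cancel] at h
    exact h
  have hzero : ∀ u, u ∉ Im → ν (ψ ⁻¹' {u}) = 0 := by
    intro u hu
    have : ψ ⁻¹' {u} = ∅ := by
      refine Set.eq_empty_iff_forall_notMem.2 fun y hy => hu ?_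
      rw [Set.mem_preimage, Set.mem_singleton_iff] at hy
      rw [← hy]
      exact hpsi_mem y
    rw [this]
    exact MeasureTheory.measure_empty
  -- summation over all fibers
  have hsum : ∑ u : Fin ℓ → A, ν (ψ ⁻¹' {u}) = 1 := by
    have hdisj : Pairwise (Function.onFun Disjoint fun u : Fin ℓ → A => ψ ⁻¹' {u}) := by
      intro u v huv
      refine Set.disjoint_left.2 fun y hy hy' => huv ?_
      rw [Set.mem_preimage, Set.mem_singleton_iff] at hy hy'
      rw [← hy, ← hy']
    have hcover : (⋃ u : Fin ℓ → A, ψ ⁻¹' {u}) = Set.univ := by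
      ext y
      simp
    rw [← tsum_fintype (L := SummationFilter.unconditional _), ← MeasureTheory.measure_iUnion hdisj hSm, hcover,
      MeasureTheory.measure_univ]
  set N := Fintype.card A * (Nat.card {h : A // M 0 h = 1}) ^ (ℓ - 1) with hNdef
  have hcardIm : Nat.card Im = N := card_image M G hG hocc hℓ
  have hsplit : ∑ u : Fin ℓ → A, ν (ψ ⁻¹' {u})
      = (Finset.univ.filter (· ∈ Im)).card • ν (ψ ⁻¹' {w}) := by
    rw [Finset.sum_congr rfl (g := fun u => if u ∈ Im then ν (ψ ⁻¹' {w}) else 0)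
      (fun u _ => by
        by_cases h : u ∈ Im
        · simp only [if_pos h]
          exact const u h
        · simp only [if_neg h]
          exact hzero u h)]
    rw [Finset.sum_ite, Finset.sum_const, Finset.sum_const_zero, add_zero]
  have hfiltercard : (Finset.univ.filter (· ∈ Im)).card = N := by
    rw [← hcardIm, Nat.card_eq_fintype_card, Fintype.card_subtype]
  have hNpos : 0 < N := by
    have h1 : 0 < Fintype.card A := Fintype.card_pos_iff.2 ⟨0⟩
    have h2 : 0 < Nat.card {h : A // M 0 h = 1} :=
      Nat.card_pos_iff.2 ⟨⟨⟨0, M_zero_zero M G hG⟩⟩, Finite.of_fintype _⟩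
    exact Nat.mul_pos h1 (Nat.pow_pos h2)
  have hmain : (N : ENNReal) * ν (ψ ⁻¹' {w}) = 1 := by
    rw [← hsum, hsplit, hfiltercard, nsmul_eq_mul]
  have hNne : (N : ENNReal) ≠ 0 := by exact_mod_cast hNpos.ne'
  have hfib : ν (ψ ⁻¹' {w}) = (N : ENNReal)⁻¹ := by
    have := congrArg (fun z => (N : ENNReal)⁻¹ * z) hmain
    simpa [← mul_assoc, ENNReal.inv_mul_cancel hNne (ENNReal.natCast_ne_top N)]
      using this
  rw [hfib, hNdef]
  push_cast
  rfl
end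

section
/- Let m ≥ 1 and let a ≥ 2s+1 satisfy p^{⌊a/2⌋} > m. Then for every n divisible by p^a and every i ≥ a, the number of integers k with 0 ≤ k ≤ n that are (m,m)-isolated in n is at least 2^{ξ_{a+i}(n)} − 1. -/
open Finset Nat

private lemma sum_lt_pow_aux (p : ℕ) (hp : 0 < p) (d : ℕ → ℕ) (hd : ∀ j, d j < p) (c : ℕ) :
    ∑ j ∈ Finset.range c, d j * p ^ j < p ^ c := by
  induction c with
  | zero => simp
  | succ c ih =>
    rw [Finset.sum_range_succ]
    have h1 := hd c
    have h2 : d c * p ^ c ≤ (p - 1) * p ^ c := by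
      apply Nat.mul_le_mul_right; omega
    have h3 : (p - 1) * p ^ c + p ^ c = p ^ (c + 1) := by
      rw [pow_succ, Nat.sub_one_mul, Nat.mul_comm p (p ^ c)]
      have : p ^ c ≤ p ^ c * p := Nat.le_mul_of_pos_right _ hp
      omega
    omega

private lemma subsum_lt (p : ℕ) (hp : 0 < p) (d : ℕ → ℕ) (hd : ∀ j, d j < p)
    {S : Finset ℕ} {c : ℕ} (hS : S ⊆ Finset.range c) :
    ∑ j ∈ S, d j * p ^ j < p ^ c :=
  lt_of_le_of_lt (Finset.sum_le_sum_of_subset hS) (sum_lt_pow_aux p hp d hd c)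

private lemma subsum_mod (p : ℕ) (hp : 0 < p) (d : ℕ → ℕ) (hd : ∀ j, d j < p)
    (S : Finset ℕ) (c : ℕ) :
    (∑ j ∈ S, d j * p ^ j) % p ^ c = ∑ j ∈ S.filter (· < c), d j * p ^ j := by
  rw [← Finset.sum_filter_add_sum_filter_not S (· < c)]
  have h2 : p ^ c ∣ ∑ j ∈ S.filter (fun j => ¬ j < c), d j * p ^ j := by
    apply Finset.dvd_sum
    intro j hj
    simp only [Finset.mem_filter, not_lt] at hj
    exact Dvd.dvd.mul_left (pow_dvd_pow p hj.2) _
  obtain ⟨u, hu⟩ := h2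
  rw [hu, Nat.add_mul_mod_self_left]
  apply Nat.mod_eq_of_lt
  apply subsum_lt p hp d hd
  intro j hj
  simp only [Finset.mem_filter] at hj
  exact Finset.mem_range.mpr hj.2

private lemma digits_getD_eq (p : ℕ) (hp : 1 < p) : ∀ j n : ℕ,
    (Nat.digits p n).getD j 0 = n / p ^ j % p := by
  intro j
  induction j with
  | zero =>
    intro n
    rcases Nat.eq_zero_or_pos n with h | h
    · simp [h]
    · rw [Nat.digits_def' hp h]; simp
  | succ j ih =>
    intro n
    rcases Nat.eq_zero_or_pos n with h | h
    · simp [h]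
    · rw [Nat.digits_def' hp h]
      simp only [List.getD_cons_succ]
      rw [ih (n / p), Nat.div_div_eq_div_mul, ← pow_succ']

private lemma subsum_digit (p : ℕ) (hp : 0 < p) (d : ℕ → ℕ) (hd : ∀ j, d j < p)
    (S : Finset ℕ) (j : ℕ) :
    (∑ k ∈ S, d k * p ^ k) / p ^ j % p = if j ∈ S then d j else 0 := by
  have key : (∑ k ∈ S, d k * p ^ k) / p ^ j % p
      = (∑ k ∈ S, d k * p ^ k) % (p ^ j * p) / p ^ j := by
    rw [Nat.mod_mul_right_div_self]
  rw [key, ← pow_succ, subsum_mod p hp d hd]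
  have hsplit : S.filter (· < j + 1) = S.filter (· < j) ∪ S.filter (· = j) := by
    ext k
    simp only [Finset.mem_filter, Finset.mem_union, ← and_or_left]
    exact and_congr_right (fun _ => by omega)
  have hdisj : Disjoint (S.filter (· < j)) (S.filter (· = j)) := by
    rw [Finset.disjoint_left]
    intro k hk1 hk2
    simp only [Finset.mem_filter] at hk1 hk2
    omega
  rw [hsplit, Finset.sum_union hdisj]
  have heq : ∑ k ∈ S.filter (· = j), d k * p ^ k = if j ∈ S then d j * p ^ j else 0 := by
    rw [Finset.sum_filter, Finset.sum_ite_eq' S j (fun k => d k * p ^ k)]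
  rw [heq]
  have hlow : ∑ k ∈ S.filter (· < j), d k * p ^ k < p ^ j := by
    apply subsum_lt p hp d hd
    intro k hk
    simp only [Finset.mem_filter] at hk
    exact Finset.mem_range.mpr hk.2
  by_cases hj : j ∈ S
  · simp only [hj, if_true]
    rw [Nat.mul_comm (d j), Nat.add_mul_div_left _ _ (Nat.pow_pos (n := j) hp), Nat.div_eq_of_lt hlow, Nat.zero_add]
  · simp only [hj, if_false]
    rw [Nat.add_zero, Nat.div_eq_of_lt hlow]

private lemma mod_sub_of_dvd (P k t : ℕ) (hP : P ∣ k) (htk : t ≤ k) (ht : 0 < t) (htP : t < P) :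
    (k - t) % P = P - t := by
  obtain ⟨q, rfl⟩ := hP
  have hq : 1 ≤ q := by
    rcases Nat.eq_zero_or_pos q with h | h
    · subst h; simp at htk; omega
    · exact h
  have key : P * (q - 1) + P = P * q := by
    rw [← Nat.mul_succ]
    congr 1
    omega
  have h2 : P * q - t = P * (q - 1) + (P - t) := by omega
  rw [h2, Nat.mul_add_mod, Nat.mod_eq_of_lt (by omega)]

private lemma base_expansion (p n c : ℕ) :
    n % p ^ c = ∑ j ∈ Finset.range c, (n / p ^ j % p) * p ^ j := by
  induction c with
  | zero => simp [Nat.mod_one]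
  | succ c ih =>
    have h1 : n % p ^ (c + 1) % p ^ c = n % p ^ c :=
      Nat.mod_mod_of_dvd _ (pow_dvd_pow p (Nat.le_succ c))
    have h2 : n % p ^ (c + 1) / p ^ c = n / p ^ c % p := by
      rw [pow_succ, Nat.mod_mul_right_div_self]
    have h3 : p ^ c * (n % p ^ (c + 1) / p ^ c) + n % p ^ (c + 1) % p ^ c = n % p ^ (c + 1) :=
      Nat.div_add_mod _ _
    rw [h1, h2] at h3
    rw [Finset.sum_range_succ, ← ih, ← h3, Nat.mul_comm, Nat.add_comm]

/-- Fix a prime `p` and `s ≥ 1`.  `k` is `(m,ℓ)`-isolated in `n`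
if `p ∤ C(n,k)` while `p^s ∣ C(n,k')` for every `k' ∈ [k-m, k+ℓ]`, `k' ≠ k`
(with `C(n,k') = 0` out of range).  Writing `ξ_i(n)` for the number of nonzero
base-`p` digits of `n` in positions `≥ i`: if `m ≥ 1`, `a ≥ 2s+1` and
`p^⌊a/2⌋ > m`, then for every `n` divisible by `p^a` and every `i ≥ a`, the
number of `0 ≤ k ≤ n` that are `(m,m)`-isolated in `n` is at least
`2^(ξ_{a+i}(n)) - 1`. -/
theorem isolated_count_lower_bound
    (p : ℕ) (hp : p.Prime) (s : ℕ) (hs : 1 ≤ s)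
    (m : ℕ) (hm : 1 ≤ m) (a : ℕ) (ha : 2 * s + 1 ≤ a) (hpa : m < p ^ (a / 2))
    (n : ℕ) (hn : p ^ a ∣ n) (i : ℕ) (hi : a ≤ i) :
    2 ^ (Nat.card {j : ℕ // a + i ≤ j ∧ (Nat.digits p n).getD j 0 ≠ 0}) - 1 ≤
      Set.ncard {k : ℕ | k ≤ n ∧ ¬ (p ∣ n.choose k) ∧
        ∀ k' : ℕ, k' ≤ k + m → k ≤ k' + m → k' ≠ k → p ^ s ∣ n.choose k'} := by
  haveI : Fact p.Prime := ⟨hp⟩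
  have hp1 : 1 < p := hp.one_lt
  have hp0 : 0 < p := hp.pos
  set d : ℕ → ℕ := fun j => n / p ^ j % p with hd_def
  have hdlt : ∀ j, d j < p := fun j => Nat.mod_lt _ hp0
  set N : ℕ := n + 1 with hN
  have hnN : n < p ^ N := by
    have h1 : n < 2 ^ N := by
      have := Nat.lt_two_pow_self (n := n)
      have h2 : (2:ℕ) ^ n < 2 ^ N := Nat.pow_lt_pow_right (by norm_num) (by omega)
      omega
    exact lt_of_lt_of_le h1 (Nat.pow_le_pow_left hp.two_le N)
  have hrep : n = ∑ j ∈ Finset.range N, d j * p ^ j := by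
    rw [← base_expansion p n N, Nat.mod_eq_of_lt hnN]
  set T : Finset ℕ := (Finset.range N).filter (fun j => a + i ≤ j ∧ d j ≠ 0) with hT
  -- the index set equals T
  have hsetT : {j : ℕ | a + i ≤ j ∧ (Nat.digits p n).getD j 0 ≠ 0} = ↑T := by
    ext j
    simp only [Set.mem_setOf_eq, hT, Finset.coe_filter, Finset.mem_range,
      digits_getD_eq p hp1]
    constructor
    · rintro ⟨h1, h2⟩
      refine ⟨?_, h1, h2⟩
      by_contra hcon
      push_neg at hcon
      have hpj : n < p ^ j := lt_of_lt_of_le hnN (Nat.pow_le_pow_right hp0 hcon)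
      exact h2 (by simp [Nat.div_eq_of_lt hpj])
    · rintro ⟨_, h1, h2⟩; exact ⟨h1, h2⟩
  have hcardT : Nat.card {j : ℕ // a + i ≤ j ∧ (Nat.digits p n).getD j 0 ≠ 0} = T.card := by
    calc Nat.card {j : ℕ // a + i ≤ j ∧ (Nat.digits p n).getD j 0 ≠ 0}
        = Set.ncard {j : ℕ | a + i ≤ j ∧ (Nat.digits p n).getD j 0 ≠ 0} :=
          Nat.card_coe_set_eq _
      _ = T.card := by rw [hsetT, Set.ncard_coe_finset]
  -- the map from subsets to isolated positions
  set f : Finset ℕ → ℕ := fun S => ∑ j ∈ S, d j * p ^ j with hf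
  set b : ℕ := max (Nat.log p n + 1) (a + 1) with hb_def
  have hb : Nat.log p n < b := lt_of_lt_of_le (Nat.lt_succ_self _) (le_max_left _ _)
  have hab : a + 1 ≤ b := le_max_right _ _
  have hTsub : ∀ S, S ⊆ T → S ⊆ Finset.range N := by
    intro S hS j hj
    exact Finset.mem_of_mem_filter j (hS hj)
  -- main membership claim
  have hmem : ∀ S, S ⊆ T → f S ∈ {k : ℕ | k ≤ n ∧ ¬ (p ∣ n.choose k) ∧
      ∀ k' : ℕ, k' ≤ k + m → k ≤ k' + m → k' ≠ k → p ^ s ∣ n.choose k'} := by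
    intro S hS
    have hSN : S ⊆ Finset.range N := hTsub S hS
    have hkn : f S ≤ n := by
      rw [hrep]
      exact Finset.sum_le_sum_of_subset hSN
    have hdvd_k : ∀ c, c ≤ a → p ^ c ∣ f S := by
      intro c hc
      apply Finset.dvd_sum
      intro j hj
      have hj' := (Finset.mem_filter.mp (hS hj)).2.1
      exact Dvd.dvd.mul_left (pow_dvd_pow p (by omega)) _
    have hdvd_n : ∀ c, c ≤ a → p ^ c ∣ n := fun c hc => (pow_dvd_pow p hc).trans hn
    refine ⟨hkn, ?_, ?_⟩
    · -- p does not divide choose n (f S)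
      have hval := padicValNat_choose (p := p) hkn hb
      have hempty : ((Finset.Ico 1 b).filter
          fun c => p ^ c ≤ f S % p ^ c + (n - f S) % p ^ c) = ∅ := by
        rw [Finset.filter_eq_empty_iff]
        intro c _
        rw [not_le]
        have h1 : f S % p ^ c = ∑ j ∈ S.filter (· < c), d j * p ^ j :=
          subsum_mod p hp0 d hdlt S c
        have hnk : n - f S = ∑ j ∈ Finset.range N \ S, d j * p ^ j := by
          have hsd : (∑ j ∈ Finset.range N \ S, d j * p ^ j) + ∑ j ∈ S, d j * p ^ j
              = ∑ j ∈ Finset.range N, d j * p ^ j := Finset.sum_sdiff hSN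
          have hfS : f S = ∑ j ∈ S, d j * p ^ j := rfl
          omega
        have h2 : (n - f S) % p ^ c
            = ∑ j ∈ (Finset.range N \ S).filter (· < c), d j * p ^ j := by
          rw [hnk]; exact subsum_mod p hp0 d hdlt _ c
        have hdisj : Disjoint (S.filter (· < c)) ((Finset.range N \ S).filter (· < c)) := by
          rw [Finset.disjoint_left]
          intro j hj1 hj2
          simp only [Finset.mem_filter, Finset.mem_sdiff] at hj1 hj2
          exact hj2.1.2 hj1.1
        rw [h1, h2, ← Finset.sum_union hdisj]
        apply subsum_lt p hp0 d hdlt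
        intro j hj
        simp only [Finset.mem_union, Finset.mem_filter] at hj
        rw [Finset.mem_range]
        rcases hj with h | h
        · exact h.2
        · exact h.2
      intro hdvd
      have hone : (1:ℕ) ≤ padicValNat p (n.choose (f S)) := by
        rw [← padicValNat_dvd_iff_le (Nat.choose_pos hkn).ne']
        rwa [pow_one]
      rw [hval, hempty] at hone
      simp at hone
    · -- all nearby k' are divisible by p^s
      intro k' h1 h2 hne
      rcases Nat.lt_or_ge n k' with hgt | hk'n
      · rw [Nat.choose_eq_zero_of_lt hgt]; exact dvd_zero _
      have hval' := padicValNat_choose (p := p) hk'n hb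
      rw [padicValNat_dvd_iff_le (Nat.choose_pos hk'n).ne', hval']
      have hsub : Finset.Ico (a / 2 + 1) (a + 1) ⊆ (Finset.Ico 1 b).filter
          fun c => p ^ c ≤ k' % p ^ c + (n - k') % p ^ c := by
        intro c hc
        rw [Finset.mem_Ico] at hc
        have hca : c ≤ a := by omega
        have hcb : c ∈ Finset.Ico 1 b := by rw [Finset.mem_Ico]; omega
        have hdk := hdvd_k c hca
        have hdn := hdvd_n c hca
        have htcp : m < p ^ c :=
          lt_of_lt_of_le hpa (Nat.pow_le_pow_right hp0 (by omega))
        rw [Finset.mem_filter]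
        refine ⟨hcb, ?_⟩
        rcases Nat.lt_or_ge k' (f S) with hlt | hge
        · set t := f S - k' with ht
          have ht1 : 1 ≤ t := by omega
          have htm : t ≤ m := by omega
          have htc : t < p ^ c := by omega
          have hkpos : p ^ c ≤ f S := Nat.le_of_dvd (by omega) hdk
          have hm1 : k' % p ^ c = p ^ c - t := by
            have hk'eq : k' = f S - t := by omega
            rw [hk'eq]
            exact mod_sub_of_dvd _ _ _ hdk (by omega) ht1 htc
          have hm2 : (n - k') % p ^ c = t := by
            have hnk' : n - k' = (n - f S) + t := by omega
            rw [hnk']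
            obtain ⟨u, hu⟩ := Nat.dvd_sub hdn hdk
            rw [hu, Nat.mul_add_mod, Nat.mod_eq_of_lt htc]
          omega
        · set t := k' - f S with ht
          have ht1 : 1 ≤ t := by omega
          have htm : t ≤ m := by omega
          have htc : t < p ^ c := by omega
          have hm1 : k' % p ^ c = t := by
            have hk'eq : k' = f S + t := by omega
            rw [hk'eq]
            obtain ⟨u, hu⟩ := hdk
            rw [hu, Nat.mul_add_mod, Nat.mod_eq_of_lt htc]
          have hnkdvd : p ^ c ∣ n - f S := Nat.dvd_sub hdn hdk
          have hm2 : (n - k') % p ^ c = p ^ c - t := by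
            have hnk' : n - k' = (n - f S) - t := by omega
            rw [hnk']
            exact mod_sub_of_dvd _ _ _ hnkdvd (by omega) ht1 htc
          omega
      calc s ≤ (Finset.Ico (a / 2 + 1) (a + 1)).card := by rw [Nat.card_Ico]; omega
        _ ≤ _ := Finset.card_le_card hsub
  -- injectivity
  have hinj : Set.InjOn f ↑T.powerset := by
    intro S1 hS1 S2 hS2 heq
    rw [Finset.mem_coe, Finset.mem_powerset] at hS1 hS2
    ext j
    have e1 : f S1 / p ^ j % p = if j ∈ S1 then d j else 0 := subsum_digit p hp0 d hdlt S1 j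
    have e2 : f S2 / p ^ j % p = if j ∈ S2 then d j else 0 := subsum_digit p hp0 d hdlt S2 j
    rw [heq] at e1
    constructor
    · intro hj
      have hdj : d j ≠ 0 := (Finset.mem_filter.mp (hS1 hj)).2.2
      by_contra hj2
      rw [if_pos hj] at e1
      rw [if_neg hj2] at e2
      omega
    · intro hj
      have hdj : d j ≠ 0 := (Finset.mem_filter.mp (hS2 hj)).2.2
      by_contra hj2
      rw [if_pos hj] at e2
      rw [if_neg hj2] at e1
      omega
  set F : Finset ℕ := T.powerset.image f with hF
  have hFcard : F.card = 2 ^ T.card := by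
    rw [hF, Finset.card_image_of_injOn hinj, Finset.card_powerset]
  have hsubset : (↑F : Set ℕ) ⊆ {k : ℕ | k ≤ n ∧ ¬ (p ∣ n.choose k) ∧
      ∀ k' : ℕ, k' ≤ k + m → k ≤ k' + m → k' ≠ k → p ^ s ∣ n.choose k'} := by
    intro x hx
    rw [Finset.mem_coe, hF, Finset.mem_image] at hx
    obtain ⟨S, hS, rfl⟩ := hx
    exact hmem S (Finset.mem_powerset.mp hS)
  have hfin : Set.Finite {k : ℕ | k ≤ n ∧ ¬ (p ∣ n.choose k) ∧
      ∀ k' : ℕ, k' ≤ k + m → k ≤ k' + m → k' ≠ k → p ^ s ∣ n.choose k'} :=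
    Set.Finite.subset (Set.finite_Iic n) (fun k hk => hk.1)
  have hle := Set.ncard_le_ncard hsubset hfin
  rw [Set.ncard_coe_finset] at hle
  rw [hcardT]
  omega
end

section
/- Let p be a prime, a ≥ 1 an integer, and b = ⌊a/2⌋. Let n, k, v ∈ ℕ with p^a ∣ n, p^a ∣ k, 0 < k ≤ n, and 1 ≤ v < p^b. Then p^b divides the binomial coefficient C(n, k−v). -/
/-- Let `p` be a prime, `a ≥ 1`, `b = ⌊a/2⌋`.  If `p^a ∣ n`,
`p^a ∣ k`, `0 < k ≤ n` and `1 ≤ v < p^b`, then `p^b ∣ C(n, k-v)`. -/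
theorem pow_dvd_choose_sub
    (p : ℕ) (hp : p.Prime) (a : ℕ) (ha : 1 ≤ a) (b : ℕ) (hb : b = a / 2)
    (n k v : ℕ) (hn : p ^ a ∣ n) (hk : p ^ a ∣ k)
    (hk0 : 0 < k) (hkn : k ≤ n) (hv1 : 1 ≤ v) (hv : v < p ^ b) :
    p ^ b ∣ n.choose (k - v) := by
  have hp2 := hp.two_le
  have hba : b ≤ a := hb ▸ Nat.div_le_self a 2
  have h2b : 2 * b ≤ a := by omega
  have hpb : p ^ b ≤ p ^ a := Nat.pow_le_pow_right hp.pos hba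
  have hvk : v < k := lt_of_lt_of_le (hv.trans_le hpb) (Nat.le_of_dvd hk0 hk)
  have hkn' : k - v ≤ n := by omega
  have hn0 : n ≠ 0 := by omega
  have hlog : a ≤ Nat.log p n :=
    (Nat.le_log_iff_pow_le hp.one_lt hn0).mpr
      ((Nat.le_of_dvd (by omega) hn))
  apply pow_dvd_of_le_emultiplicity
  rw [hp.emultiplicity_choose hkn' (Nat.lt_succ_self (Nat.log p n))]
  have hsub : Finset.Ico (b + 1) (a + 1) ⊆
      Finset.filter (fun i => p ^ i ≤ (k - v) % p ^ i + (n - (k - v)) % p ^ i)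
        (Finset.Ico 1 (Nat.log p n + 1)) := by
    intro i hi
    simp only [Finset.mem_Ico, Finset.mem_filter] at *
    obtain ⟨hi1, hi2⟩ := hi
    have hia : i ≤ a := by omega
    have hvpi : v < p ^ i := hv.trans_le (Nat.pow_le_pow_right hp.pos (by omega))
    have hpik : p ^ i ∣ k := dvd_trans (pow_dvd_pow p hia) hk
    have hpink : p ^ i ∣ n - k :=
      Nat.dvd_sub (dvd_trans (pow_dvd_pow p hia) hn) hpik
    obtain ⟨m, hm⟩ := hpik
    have hm0 : m ≠ 0 := by rintro rfl; omega
    obtain ⟨m', rfl⟩ := Nat.exists_eq_succ_of_ne_zero hm0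
    have hmm : k = p ^ i * m' + p ^ i := by rw [hm, Nat.mul_succ]
    have h1 : (k - v) % p ^ i = p ^ i - v := by
      have hkv : k - v = p ^ i * m' + (p ^ i - v) := by omega
      rw [hkv, Nat.mul_add_mod, Nat.mod_eq_of_lt (by omega)]
    obtain ⟨m2, hm2⟩ := hpink
    have h2 : (n - (k - v)) % p ^ i = v := by
      have hnk : n - (k - v) = p ^ i * m2 + v := by omega
      rw [hnk, Nat.mul_add_mod, Nat.mod_eq_of_lt hvpi]
    exact ⟨⟨by omega, by omega⟩, by rw [h1, h2]; omega⟩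
  have hcard : b ≤ (Finset.filter (fun i => p ^ i ≤ (k - v) % p ^ i + (n - (k - v)) % p ^ i)
      (Finset.Ico 1 (Nat.log p n + 1))).card := by
    have := Finset.card_le_card hsub
    rw [Nat.card_Ico] at this
    omega
  exact_mod_cast Nat.cast_le.mpr hcard
end

section
/- Let p be a prime and n, k ∈ ℕ with k ≤ n. Let j' < c be natural numbers such that the j'-th base-p digit of k is strictly greater than the j'-th base-p digit of n, and for every j with j' < j < c the j-th base-p digit of k is greater than or equal to the j-th base-p digit of n. Then p^{c−j'} divides the binomial coefficient C(n,k). -/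
private lemma digit_eq (p : ℕ) (hp : 1 < p) : ∀ (j m : ℕ),
    (Nat.digits p m).getD j 0 = m / p ^ j % p := by
  intro j
  induction j with
  | zero =>
    intro m
    rcases Nat.eq_zero_or_pos m with h | h
    · simp [h]
    · rw [Nat.digits_def' hp h]; simp
  | succ j ih =>
    intro m
    rcases Nat.eq_zero_or_pos m with h | h
    · simp [h]
    · rw [Nat.digits_def' hp h]
      simp only [List.getD_cons_succ, ih (m / p)]
      rw [Nat.div_div_eq_div_mul, ← pow_succ']
private lemma mod_pow_split (p : ℕ) (j m : ℕ) :
    m % p ^ (j + 1) = m % p ^ j + p ^ j * (m / p ^ j % p) := by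
  rw [pow_succ, Nat.mod_mul]

/-- Let `p` be a prime, `k ≤ n`, and `j' < c` natural numbers
such that the `j'`-th base-`p` digit of `k` is strictly greater than that of
`n`, while for every `j' < j < c` the `j`-th digit of `k` is at least that of
`n`.  Then `p^(c-j') ∣ C(n,k)`. -/
theorem pow_dvd_choose_of_digit_excess
    (p : ℕ) (hp : p.Prime) (n k : ℕ) (hkn : k ≤ n)
    (j' c : ℕ) (hj'c : j' < c)
    (hdig : (Nat.digits p n).getD j' 0 < (Nat.digits p k).getD j' 0)
    (hdig' : ∀ j : ℕ, j' < j → j < c →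
      (Nat.digits p n).getD j 0 ≤ (Nat.digits p k).getD j 0) :
    p ^ (c - j') ∣ n.choose k := by
  have hp1 : 1 < p := hp.one_lt
  simp only [digit_eq p hp1] at hdig hdig'
  -- strict inequality of truncations
  have key : ∀ i, j' < i → i ≤ c → n % p ^ i < k % p ^ i := by
    intro i
    induction i with
    | zero => omega
    | succ i ih =>
      intro hji hic
      rcases Nat.lt_or_ge j' i with hlt | hge
      · have h1 := ih hlt (le_of_lt hic)
        have h2 := hdig' i hlt hic
        rw [mod_pow_split, mod_pow_split]
        have := Nat.mul_le_mul_left (p ^ i) h2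
        omega
      · have hji' : j' = i := by omega
        subst hji'
        rw [mod_pow_split, mod_pow_split]
        have h1 : n % p ^ j' < p ^ j' := Nat.mod_lt _ (Nat.pow_pos hp.pos)
        calc n % p ^ j' + p ^ j' * (n / p ^ j' % p)
            < p ^ j' + p ^ j' * (n / p ^ j' % p) := by omega
          _ = p ^ j' * (n / p ^ j' % p + 1) := by ring
          _ ≤ p ^ j' * (k / p ^ j' % p) := Nat.mul_le_mul_left _ (by omega)
          _ ≤ k % p ^ j' + p ^ j' * (k / p ^ j' % p) := Nat.le_add_left _ _
  -- carries at every position in (j', c]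
  set b := max (c + 1) (Nat.log p n + 1) with hb
  have hcb : c + 1 ≤ b := le_max_left _ _
  have hnb : Nat.log p n < b := lt_of_lt_of_le (lt_add_one _) (le_max_right _ _)
  have hcard : (c - j' : ℕ) ≤
      ({i ∈ Finset.Ico 1 b | p ^ i ≤ k % p ^ i + (n - k) % p ^ i}).card := by
    have hsub : Finset.Ioc j' c ⊆
        {i ∈ Finset.Ico 1 b | p ^ i ≤ k % p ^ i + (n - k) % p ^ i} := by
      intro i hi
      rw [Finset.mem_Ioc] at hi
      rw [Finset.mem_filter, Finset.mem_Ico]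
      refine ⟨⟨by omega, by omega⟩, ?_⟩
      by_contra hlt
      push_neg at hlt
      have hmod : k % p ^ i + (n - k) % p ^ i = n % p ^ i := by
        rw [← Nat.mod_eq_of_lt hlt, ← Nat.add_mod, Nat.add_sub_cancel' hkn]
      have hk2 := key i hi.1 hi.2
      exact absurd (le_of_le_of_eq (Nat.le_add_right (k % p ^ i) ((n - k) % p ^ i)) hmod)
        (Nat.not_le.mpr hk2)
    calc (c - j' : ℕ) = (Finset.Ioc j' c).card := by rw [Nat.card_Ioc]
      _ ≤ _ := Finset.card_le_card hsub
  have := Nat.Prime.emultiplicity_choose hp hkn hnb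
  exact pow_dvd_of_le_emultiplicity (by rw [this]; exact_mod_cast Nat.cast_le.mpr hcard)
end

section
/- Let a ≥ 0 be an integer. The set M = {n ≥ 2 : ξ_{⌊(1/2)log_p(n)⌋}(n) ≥ (1/5)·(log_p(n) + a)} has natural density 1, i.e. lim_{N→∞} |M ∩ {0,…,N−1}|/N = 1. -/
open Finset


lemma dg_getD (p : ℕ) (hp : 2 ≤ p) : ∀ (j n : ℕ), (Nat.digits p n).getD j 0 = n / p^j % p := by
  intro j
  induction j with
  | zero =>
    intro n
    rcases Nat.eq_zero_or_pos n with h | h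
    · simp [h]
    · rw [Nat.digits_def' (by omega : 1 < p) h]
      simp
  | succ j ih =>
    intro n
    rcases Nat.eq_zero_or_pos n with h | h
    · simp [h]
    · rw [Nat.digits_def' (by omega : 1 < p) h]
      simp only [List.getD_cons_succ, ih]
      rw [Nat.div_div_eq_div_mul, ← pow_succ']

def cnt (p K h : ℕ) : ℕ := ((range K).filter (fun j => h / p^j % p ≠ 0)).card

def Dd (p K m : ℕ) : ℕ := ((range (p^K)).filter (fun h => cnt p K h ≤ m)).card

lemma cnt_succ (p : ℕ) (K h : ℕ) :
    cnt p (K+1) h = cnt p K (h/p) + (if h % p ≠ 0 then 1 else 0) := by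
  unfold cnt
  rw [Finset.card_filter, Finset.card_filter, Finset.sum_range_succ']
  congr 1
  · apply Finset.sum_congr rfl
    intro j _
    congr 1
    rw [eq_iff_iff]
    constructor <;> intro hh <;> [skip; skip] <;>
    · rw [Nat.div_div_eq_div_mul, ← pow_succ'] at * <;> exact hh
  · simp

lemma cnt_zero_imp (p : ℕ) (hp : 2 ≤ p) (K h : ℕ) (hh : h < p^K) (hc : cnt p K h = 0) :
    h = 0 := by
  by_contra h0
  have hl : Nat.log p h < K := Nat.log_lt_of_lt_pow h0 hh
  have : h / p ^ (Nat.log p h) % p ≠ 0 := by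
    have h1 : p ^ Nat.log p h ≤ h := Nat.pow_log_le_self p h0
    have h2 : h < p ^ (Nat.log p h + 1) := Nat.lt_pow_succ_log_self (by omega) h
    have hq1 : 1 ≤ h / p ^ Nat.log p h := (Nat.one_le_div_iff (by positivity)).2 h1
    have hq2 : h / p ^ Nat.log p h < p := by
      rw [Nat.div_lt_iff_lt_mul (by positivity), ← pow_succ']; exact h2
    have := Nat.mod_eq_of_lt hq2
    omega
  have : Nat.log p h ∈ (range K).filter (fun j => h / p^j % p ≠ 0) := by
    simp [hl, this]
  have := Finset.card_pos.2 ⟨_, this⟩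
  unfold cnt at hc; omega

lemma Dd_zero_left (p m : ℕ) : Dd p 0 m = 1 := by
  unfold Dd cnt
  norm_num

lemma Dd_zero_right (p K : ℕ) (hp : 2 ≤ p) : Dd p K 0 = 1 := by
  unfold Dd
  have : (range (p^K)).filter (fun h => cnt p K h ≤ 0) = {0} := by
    ext h
    simp only [Finset.mem_filter, Finset.mem_range, Finset.mem_singleton, Nat.le_zero]
    constructor
    · rintro ⟨h1, h2⟩; exact cnt_zero_imp p hp K h h1 h2
    · rintro rfl
      refine ⟨by positivity, ?_⟩
      unfold cnt
      simp
  rw [this]; rfl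

lemma Dd_rec (p K m : ℕ) (hp : 2 ≤ p) :
    Dd p (K+1) (m+1) ≤ Dd p K (m+1) + (p-1) * Dd p K m := by
  classical
  set A := (range (p^K)).filter (fun h => cnt p K h ≤ m+1) with hA
  set B := (range (p^K)).filter (fun h => cnt p K h ≤ m) with hB
  set S := ({0} ×ˢ A) ∪ ((Ico 1 p) ×ˢ B) with hS
  have key : Dd p (K+1) (m+1) ≤ S.card := by
    apply Finset.card_le_card_of_injOn (fun h => (h % p, h / p))
    · intro h hh
      simp only [Finset.mem_coe, Finset.mem_filter, Finset.mem_range] at hh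
      obtain ⟨h1, h2⟩ := hh
      have hdiv : h / p < p ^ K := by
        rw [Nat.div_lt_iff_lt_mul (by omega), ← pow_succ]; exact h1
      rw [cnt_succ] at h2
      simp only [Finset.mem_coe, hS, Finset.mem_union, Finset.mem_product, Finset.mem_singleton,
        Finset.mem_Ico, hA, hB, Finset.mem_filter, Finset.mem_range]
      by_cases h0 : h % p = 0
      · rw [if_neg (by simpa using h0)] at h2
        exact Or.inl ⟨h0, hdiv, h2⟩
      · rw [if_pos h0] at h2
        exact Or.inr ⟨⟨by omega, Nat.mod_lt _ (by omega)⟩, hdiv, by omega⟩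
    · intro x hx y hy hxy
      simp only [Prod.mk.injEq] at hxy
      rw [← Nat.div_add_mod x p, ← Nat.div_add_mod y p, hxy.1, hxy.2]
  have : S.card ≤ A.card + (p-1) * B.card := by
    refine (Finset.card_union_le _ _).trans ?_
    rw [Finset.card_product, Finset.card_product]
    simp [Nat.card_Ico]
  exact key.trans this

lemma Dd_bound (p : ℕ) (hp : 2 ≤ p) : ∀ K m, (Dd p K m : ℝ) ≤ (3/2)^m * ((2*p+1)/3)^K := by
  have hY : (1:ℝ) ≤ (2*p+1)/3 := by
    rw [le_div_iff₀ (by norm_num)]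
    have : (2:ℝ) ≤ (p:ℝ) := by exact_mod_cast hp
    nlinarith
  have hX : (1:ℝ) ≤ (3/2:ℝ) := by norm_num
  intro K
  induction K with
  | zero =>
    intro m
    rw [Dd_zero_left]
    simpa using one_le_pow₀ hX (n := m)
  | succ K ih =>
    intro m
    cases m with
    | zero =>
      rw [Dd_zero_right p _ hp]
      push_cast
      exact one_le_mul_of_one_le_of_one_le (by norm_num) (one_le_pow₀ hY)
    | succ m =>
      have h1 : (Dd p (K+1) (m+1) : ℝ) ≤ (Dd p K (m+1) : ℝ) + ((p:ℝ)-1) * Dd p K m := by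
        have := Dd_rec p K m hp
        have hcast : ((p:ℝ)-1) = ((p-1 : ℕ) : ℝ) := by
          have : (1:ℕ) ≤ p := by omega
          push_cast [this]
          ring
        rw [hcast]
        exact_mod_cast this
      refine h1.trans ?_
      have h2 := ih (m+1)
      have h3 := ih m
      have hp' : (0:ℝ) ≤ (p:ℝ)-1 := by
        have : (2:ℝ) ≤ (p:ℝ) := by exact_mod_cast hp
        linarith
      refine (add_le_add h2 (mul_le_mul_of_nonneg_left h3 hp')).trans ?_
      rw [pow_succ ((3/2:ℝ)), pow_succ (((2*p+1)/3:ℝ))]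
      ring_nf
      nlinarith [pow_nonneg (by norm_num : (0:ℝ) ≤ 3/2) m, pow_nonneg (le_trans zero_le_one hY) K,
        pow_le_pow_left₀ (by norm_num : (0:ℝ) ≤ 1) hY K]

lemma logb_bounds (p n : ℕ) (hp : 2 ≤ p) (hn : 1 ≤ n) :
    ((Nat.log p n : ℝ) ≤ Real.logb p n) ∧ Real.logb p n < Nat.log p n + 1 := by
  have h0 : (0:ℝ) ≤ (n:ℝ) := by positivity
  have hfl : ⌊Real.logb p n⌋ = Nat.log p n := by
    rw [Real.floor_logb_natCast h0, Int.log_natCast]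
  constructor
  · have := Int.floor_le (Real.logb p n)
    rw [hfl] at this
    exact_mod_cast this
  · have := Int.lt_floor_add_one (Real.logb p n)
    rw [hfl] at this
    exact_mod_cast this

lemma floor_half_logb (p n : ℕ) (hp : 2 ≤ p) (hn : 1 ≤ n) :
    ⌊Real.logb p n / 2⌋₊ = Nat.log p n / 2 := by
  obtain ⟨h1, h2⟩ := logb_bounds p n hp hn
  set k := Nat.log p n
  have hk0 : (0:ℝ) ≤ (k:ℝ) := by positivity
  rw [Nat.floor_eq_iff (by linarith : (0:ℝ) ≤ Real.logb p n / 2)]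
  have ha : ((k/2 : ℕ):ℝ) * 2 ≤ (k:ℝ) := by
    have := Nat.div_mul_le_self k 2
    exact_mod_cast this
  have hb : (k:ℝ) + 1 ≤ (((k/2 : ℕ):ℝ) + 1) * 2 := by
    have : k + 1 ≤ (k/2 + 1) * 2 := by omega
    exact_mod_cast this
  constructor <;> linarith

/-- the set in the statement, as a finset -/

lemma nat_card_eq_cnt (p a n : ℕ) (hp : 2 ≤ p) (hn : 1 ≤ n) :
    Nat.card {j : ℕ // Nat.floor (Real.logb p n / 2) ≤ j ∧
        (Nat.digits p n).getD j 0 ≠ 0}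
      = cnt p (Nat.log p n + 1 - Nat.log p n / 2) (n / p ^ (Nat.log p n / 2)) := by
  classical
  set k := Nat.log p n with hk
  set i := k / 2 with hi
  set K := k + 1 - i with hK
  have hik : i ≤ k := Nat.div_le_self _ _
  -- rewrite the floor
  have hfl := floor_half_logb p n hp hn
  -- the set as a finset
  have hset : {j : ℕ | Nat.floor (Real.logb p n / 2) ≤ j ∧ (Nat.digits p n).getD j 0 ≠ 0}
      = ↑((Ico i (k+1)).filter (fun j => n / p^j % p ≠ 0)) := by
    ext j
    simp only [Set.mem_setOf_eq, Finset.coe_filter, Finset.mem_Ico, hfl, dg_getD p hp,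
      Set.mem_setOf_eq]
    constructor
    · rintro ⟨hj1, hj2⟩
      refine ⟨⟨hj1, ?_⟩, hj2⟩
      by_contra hjk
      push_neg at hjk
      have : n < p ^ j := lt_of_lt_of_le (Nat.lt_pow_succ_log_self (by omega) n)
        (Nat.pow_le_pow_right (by omega) hjk)
      rw [Nat.div_eq_of_lt this] at hj2
      exact hj2 (by simp)
    · rintro ⟨⟨hj1, _⟩, hj2⟩
      exact ⟨hj1, hj2⟩
  have : Nat.card {j : ℕ // Nat.floor (Real.logb p n / 2) ≤ j ∧
        (Nat.digits p n).getD j 0 ≠ 0}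
      = ((Ico i (k+1)).filter (fun j => n / p^j % p ≠ 0)).card := by
    have h1 : Nat.card {j : ℕ // Nat.floor (Real.logb p n / 2) ≤ j ∧
        (Nat.digits p n).getD j 0 ≠ 0}
        = ({j : ℕ | Nat.floor (Real.logb p n / 2) ≤ j ∧ (Nat.digits p n).getD j 0 ≠ 0}).ncard :=
      Nat.card_coe_set_eq _
    rw [h1, hset, Set.ncard_coe_finset]
  rw [this]
  unfold cnt
  apply Finset.card_nbij' (fun j => j - i) (fun j => j + i)
  · intro j hj
    simp only [Finset.mem_coe, Finset.mem_filter, Finset.mem_Ico] at hj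
    simp only [Finset.mem_coe, Finset.mem_filter, Finset.mem_range]
    obtain ⟨⟨hj1, hj2⟩, hj3⟩ := hj
    constructor
    · omega
    · have : n / p ^ (i + (j - i)) = n / p ^ i / p ^ (j - i) := by
        rw [pow_add, Nat.div_div_eq_div_mul]
      rw [← this, Nat.add_sub_cancel' hj1]
      exact hj3
  · intro j hj
    simp only [Finset.mem_coe, Finset.mem_filter, Finset.mem_range] at hj
    simp only [Finset.mem_coe, Finset.mem_filter, Finset.mem_Ico]
    obtain ⟨hj1, hj2⟩ := hj
    refine ⟨⟨by omega, by omega⟩, ?_⟩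
    have : n / p ^ (j + i) = n / p ^ i / p ^ j := by
      rw [add_comm, pow_add, Nat.div_div_eq_div_mul]
    rw [this]
    exact hj2
  · intro j hj
    simp only [Finset.mem_coe, Finset.mem_filter, Finset.mem_Ico] at hj
    dsimp only
    omega
  · intro j hj
    dsimp only
    omega

def badP (p a : ℕ) (n : ℕ) : Prop := 2 ≤ n ∧ ¬ ((1/5:ℝ)*(Real.logb p n + a) ≤
    (Nat.card {j : ℕ // Nat.floor (Real.logb p n / 2) ≤ j ∧
      (Nat.digits p n).getD j 0 ≠ 0} : ℝ))

noncomputable def badF (p a k : ℕ) : Finset ℕ :=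
  @Finset.filter _ (badP p a) (Classical.decPred _) (Ico (p^k) (p^(k+1)))

lemma badBlock_card (p a k : ℕ) (hp : 2 ≤ p) :
    (badF p a k).card ≤ p^(k/2) * Dd p (k+1-k/2) ((k+a)/5) := by
  classical
  set i := k / 2 with hi
  set K := k + 1 - i with hK
  set m := (k+a)/5 with hm
  have hik : i ≤ k := Nat.div_le_self _ _
  have hpK : p ^ (k+1) = p ^ i * p ^ K := by rw [← pow_add]; congr 1; omega
  rw [show p^(k/2) * Dd p (k+1-k/2) ((k+a)/5) = (range (p^i) ×ˢ
    ((range (p^K)).filter (fun h => cnt p K h ≤ m))).card by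
      rw [Finset.card_product, Finset.card_range]; rfl]
  apply Finset.card_le_card_of_injOn (fun n => (n % p^i, n / p^i))
  · intro n hn
    simp only [Finset.mem_coe, badF, Finset.mem_filter, Finset.mem_Ico] at hn
    obtain ⟨⟨hn1, hn2⟩, hn3, hn4⟩ := hn
    have hn1' : 1 ≤ n := by
      have : 1 ≤ p ^ k := Nat.one_le_pow _ _ (by omega)
      omega
    have hlog : Nat.log p n = k := Nat.log_eq_of_pow_le_of_lt_pow hn1 hn2
    have hmem2 : n / p^i < p^K := by
      rw [Nat.div_lt_iff_lt_mul (by positivity), mul_comm, ← hpK]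
      exact hn2
    -- badness gives cnt bound
    have hcard := nat_card_eq_cnt p a n hp hn1'
    rw [hlog] at hcard
    rw [hcard] at hn4
    push_neg at hn4
    obtain ⟨hlb1, hlb2⟩ := logb_bounds p n hp hn1'
    rw [hlog] at hlb1 hlb2
    have hreal : (cnt p K (n / p^i) : ℝ) * 5 < (k:ℝ) + 1 + a := by
      have := hn4
      nlinarith
    have hnat : cnt p K (n / p^i) * 5 < k + 1 + a := by exact_mod_cast hreal
    have hcnt : cnt p K (n / p^i) ≤ m := by
      rw [hm, Nat.le_div_iff_mul_le (by norm_num)]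
      omega
    simp only [Finset.mem_coe, Finset.mem_product, Finset.mem_range, Finset.mem_filter]
    exact ⟨Nat.mod_lt _ (by positivity), hmem2, hcnt⟩
  · intro x hx y hy hxy
    simp only [Prod.mk.injEq] at hxy
    rw [← Nat.div_add_mod x (p^i), ← Nat.div_add_mod y (p^i), hxy.1, hxy.2]

section
variable (p : ℕ)

noncomputable def uu : ℝ := (2*p+1)/(3*p)
noncomputable def rr : ℝ := (9/4) * (uu p)^5
noncomputable def sg : ℝ := (rr p) ^ (1/10 : ℝ)

variable (hp : 2 ≤ p)
include hp

lemma pR : (2:ℝ) ≤ (p:ℝ) := by exact_mod_cast hp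

lemma uu_pos : 0 < uu p := by
  have := pR p hp; unfold uu; positivity

lemma uu_le : uu p ≤ 5/6 := by
  have := pR p hp
  rw [uu, div_le_div_iff₀ (by linarith) (by norm_num)]
  linarith

lemma rr_pos : 0 < rr p := by
  have := uu_pos p hp; unfold rr; positivity

lemma rr_lt_one : rr p < 1 := by
  have h1 := uu_pos p hp
  have h2 := uu_le p hp
  have : uu p ^ 5 ≤ (5/6)^5 := by
    apply pow_le_pow_left₀ h1.le h2
  rw [rr]
  nlinarith

lemma sg_pos : 0 < sg p := Real.rpow_pos_of_pos (rr_pos p hp) _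

lemma sg_lt_one : sg p < 1 :=
  Real.rpow_lt_one (rr_pos p hp).le (rr_lt_one p hp) (by norm_num)

lemma sg_pow_ten : (sg p)^(10:ℕ) = rr p := by
  rw [sg, ← Real.rpow_natCast ((rr p) ^ (1/10:ℝ)) 10, ← Real.rpow_mul (rr_pos p hp).le]
  norm_num

lemma one_lt_sg_mul_p : 1 < sg p * p := by
  have hσ := sg_pos p hp
  have hpR := pR p hp
  have h10 : (1:ℝ) < (sg p * p)^(10:ℕ) := by
    rw [mul_pow, sg_pow_ten p hp, rr]
    have : (uu p * (p:ℝ)^2)^5 = uu p ^5 * ((p:ℝ)^(10:ℕ)/1) := by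
      rw [mul_pow, ← pow_mul]; norm_num
    have hup2 : (10/3 : ℝ) ≤ uu p * (p:ℝ)^2 := by
      rw [uu, div_mul_eq_mul_div, le_div_iff₀ (by linarith)]
      nlinarith
    nlinarith [pow_le_pow_left₀ (by norm_num : (0:ℝ) ≤ 10/3) hup2 5,
      pow_pos (uu_pos p hp) 5, pow_pos (lt_of_lt_of_le two_pos hpR) 10]
  by_contra hle
  push_neg at hle
  have : (sg p * p)^(10:ℕ) ≤ 1 := pow_le_one₀ (by positivity) hle
  linarith

end

noncomputable def Ca (a : ℕ) : ℝ := ((3/2:ℝ)^(2*a)) ^ (1/10 : ℝ)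

lemma Ca_pos (a : ℕ) : 0 < Ca a := by unfold Ca; positivity

lemma block_bound (p a k : ℕ) (hp : 2 ≤ p) :
    ((badF p a k).card : ℝ) ≤ Ca a * (p:ℝ) * (sg p * p)^k := by
  have hpR := pR p hp
  have hp0 : (0:ℝ) < (p:ℝ) := by linarith
  set i := k / 2 with hi
  set K := k + 1 - i with hK
  set m := (k+a)/5 with hm
  have hu0 := uu_pos p hp
  have hu1 : uu p ≤ 1 := (uu_le p hp).trans (by norm_num)
  have hr0 := rr_pos p hp
  have hσ0 := sg_pos p hp
  -- step 1 : card ≤ p^(k+1) * T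
  set T : ℝ := (3/2)^m * (uu p)^K with hT
  have hT0 : 0 ≤ T := by positivity
  have hYu : ((2*(p:ℝ)+1)/3) = uu p * p := by
    rw [uu]; field_simp
  have step1 : ((badF p a k).card : ℝ) ≤ (p:ℝ)^(k+1) * T := by
    have h1 : ((badF p a k).card : ℝ) ≤ (p:ℝ)^i * ((Dd p K m : ℕ) : ℝ) := by
      have := badBlock_card p a k hp
      exact_mod_cast this
    refine h1.trans ?_
    have h2 := Dd_bound p hp K m
    rw [hYu, mul_pow] at h2
    calc (p:ℝ)^i * ((Dd p K m : ℕ) : ℝ)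
        ≤ (p:ℝ)^i * ((3/2)^m * ((uu p)^K * (p:ℝ)^K)) :=
          mul_le_mul_of_nonneg_left h2 (by positivity)
      _ = ((p:ℝ)^i * (p:ℝ)^K) * T := by rw [hT]; ring
      _ = (p:ℝ)^(k+1) * T := by
          rw [← pow_add]
          congr 2
          omega
  -- step 2 : T ≤ Ca a * (sg p)^k
  have step2 : T ≤ Ca a * (sg p)^k := by
    have h10 : T^(10:ℕ) ≤ (3/2:ℝ)^(2*a) * (rr p)^k := by
      have e1 : T^(10:ℕ) = (3/2:ℝ)^(10*m) * (uu p)^(10*K) := by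
        rw [hT, mul_pow, ← pow_mul, ← pow_mul, mul_comm m 10, mul_comm K 10]
      rw [e1]
      have b1 : (3/2:ℝ)^(10*m) ≤ (3/2:ℝ)^(2*k+2*a) :=
        pow_le_pow_right₀ (by norm_num) (by omega)
      have b2 : (uu p)^(10*K) ≤ (uu p)^(5*k+5) :=
        pow_le_pow_of_le_one hu0.le hu1 (by omega)
      calc (3/2:ℝ)^(10*m) * (uu p)^(10*K)
          ≤ (3/2:ℝ)^(2*k+2*a) * (uu p)^(5*k+5) := by
            apply mul_le_mul b1 b2 (by positivity) (by positivity)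
        _ = (3/2:ℝ)^(2*a) * ((9/4) * (uu p)^5)^k * (uu p)^5 := by
            rw [pow_add, pow_add, pow_mul, pow_mul, mul_pow]
            norm_num
            ring
        _ ≤ (3/2:ℝ)^(2*a) * ((9/4) * (uu p)^5)^k * 1 :=
            mul_le_mul_of_nonneg_left (pow_le_one₀ hu0.le hu1) (by positivity)
        _ = (3/2:ℝ)^(2*a) * (rr p)^k := by
            rw [show ((9/4:ℝ) * (uu p)^5) = rr p from rfl]; ring
    -- take 10-th roots
    have hT10 : T = (T^(10:ℕ)) ^ (1/10:ℝ) := by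
      rw [← Real.rpow_natCast T 10, ← Real.rpow_mul hT0]
      norm_num
    rw [hT10]
    have : ((T^(10:ℕ)) : ℝ) ^ (1/10:ℝ) ≤ ((3/2:ℝ)^(2*a) * (rr p)^k) ^ (1/10:ℝ) :=
      Real.rpow_le_rpow (by positivity) h10 (by norm_num)
    refine this.trans_eq ?_
    rw [Real.mul_rpow (by positivity) (by positivity)]
    congr 1
    rw [← Real.rpow_natCast (rr p) k, ← Real.rpow_mul hr0.le, mul_comm (k:ℝ) (1/10:ℝ),
      Real.rpow_mul hr0.le, Real.rpow_natCast]
    rfl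
  calc ((badF p a k).card : ℝ) ≤ (p:ℝ)^(k+1) * T := step1
    _ ≤ (p:ℝ)^(k+1) * (Ca a * (sg p)^k) := mul_le_mul_of_nonneg_left step2 (by positivity)
    _ = Ca a * (p:ℝ) * (sg p * p)^k := by
        rw [mul_pow, pow_succ]
        ring

noncomputable def badC (p a N : ℕ) : ℕ :=
  ({n : ℕ | badP p a n} ∩ Set.Iio N).ncard

lemma badC_le (p a N : ℕ) (hp : 2 ≤ p) (hN : 1 ≤ N) :
    (badC p a N : ℝ) ≤ (Nat.log p N + 1 : ℕ) * (Ca a * (p:ℝ) * (sg p * p)^(Nat.log p N)) := by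
  classical
  set L := Nat.log p N with hL
  -- as a finset
  have h1 : badC p a N = ((range N).filter (badP p a)).card := by
    unfold badC
    rw [← Set.ncard_coe_finset]
    congr 1
    ext n
    simp [Set.mem_setOf_eq]
    tauto
  have h2 : (range N).filter (badP p a) ⊆ (range (L+1)).biUnion (badF p a) := by
    intro n hn
    simp only [Finset.mem_filter, Finset.mem_range] at hn
    obtain ⟨hnN, hbad⟩ := hn
    have hn2 : 2 ≤ n := hbad.1
    rw [Finset.mem_biUnion]
    refine ⟨Nat.log p n, ?_, ?_⟩
    · simp only [Finset.mem_range]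
      have := Nat.log_mono_right (le_of_lt hnN) (b := p)
      omega
    · simp only [badF, Finset.mem_filter, Finset.mem_Ico]
      exact ⟨⟨Nat.pow_log_le_self p (by omega), Nat.lt_pow_succ_log_self (by omega) n⟩, hbad⟩
  have h3 : badC p a N ≤ ∑ k ∈ range (L+1), (badF p a k).card := by
    rw [h1]
    exact (Finset.card_le_card h2).trans (Finset.card_biUnion_le)
  have h4 : (badC p a N : ℝ) ≤ ∑ k ∈ range (L+1), ((badF p a k).card : ℝ) := by
    push_cast at h3 ⊢
    exact_mod_cast h3
  refine h4.trans ?_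
  have h5 : ∀ k ∈ range (L+1), ((badF p a k).card : ℝ) ≤ Ca a * (p:ℝ) * (sg p * p)^L := by
    intro k hk
    refine (block_bound p a k hp).trans ?_
    apply mul_le_mul_of_nonneg_left _ (mul_nonneg (Ca_pos a).le (by positivity))
    apply pow_le_pow_right₀ (le_of_lt (one_lt_sg_mul_p p hp))
    simpa using Nat.lt_succ_iff.mp (Finset.mem_range.mp hk)
  calc ∑ k ∈ range (L+1), ((badF p a k).card : ℝ)
      ≤ ∑ _k ∈ range (L+1), Ca a * (p:ℝ) * (sg p * p)^L := Finset.sum_le_sum h5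
    _ = (L+1 : ℕ) * (Ca a * (p:ℝ) * (sg p * p)^L) := by
        rw [Finset.sum_const, Finset.card_range]
        push_cast
        ring

lemma tendsto_natLog (p : ℕ) (hp : 2 ≤ p) :
    Filter.Tendsto (Nat.log p) Filter.atTop Filter.atTop := by
  rw [Filter.tendsto_atTop]
  intro b
  filter_upwards [Filter.eventually_ge_atTop (p^b)] with N hN
  have hN0 : N ≠ 0 := by
    have : 1 ≤ p ^ b := Nat.one_le_pow _ _ (by omega)
    omega
  exact (Nat.le_log_iff_pow_le (by omega) hN0).mpr hN

noncomputable def gb (p a : ℕ) (L : ℕ) : ℝ := Ca a * p * ((L+1) * (sg p)^L)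

lemma tendsto_gb (p a : ℕ) (hp : 2 ≤ p) :
    Filter.Tendsto (gb p a) Filter.atTop (nhds 0) := by
  have hσ0 := sg_pos p hp
  have hσ1 := sg_lt_one p hp
  have t1 := tendsto_pow_const_mul_const_pow_of_lt_one 1 hσ0.le hσ1
  have t2 := tendsto_pow_atTop_nhds_zero_of_lt_one hσ0.le hσ1
  have t3 : Filter.Tendsto (fun L : ℕ => ((L:ℝ)+1) * (sg p)^L) Filter.atTop (nhds 0) := by
    have := t1.add t2
    rw [add_zero] at this
    refine this.congr (fun L => ?_)
    rw [pow_one]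
    ring
  have := t3.const_mul (Ca a * (p:ℝ))
  rw [mul_zero] at this
  exact this.congr (fun L => by rw [gb])

lemma badC_div_le (p a N : ℕ) (hp : 2 ≤ p) (hN : 1 ≤ N) :
    (badC p a N : ℝ) / N ≤ gb p a (Nat.log p N) := by
  have hσ0 := sg_pos p hp
  have hCa := Ca_pos a
  have hp0 : (0:ℝ) < p := by
    have : (2:ℝ) ≤ (p:ℝ) := by exact_mod_cast hp
    linarith
  have hN0 : (0:ℝ) < N := by exact_mod_cast hN
  set L := Nat.log p N with hL
  have hpL : (p:ℝ)^L ≤ N := by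
    have := Nat.pow_log_le_self p (by omega : N ≠ 0)
    exact_mod_cast this
  have h1 := badC_le p a N hp hN
  have h2 : (badC p a N : ℝ) / N ≤ ((L + 1 : ℕ) * (Ca a * (p:ℝ) * (sg p * p)^L)) / N :=
    div_le_div_of_nonneg_right h1 hN0.le |>.trans_eq rfl
  refine h2.trans ?_
  rw [gb]
  have e1 : ((L + 1 : ℕ) * (Ca a * (p:ℝ) * (sg p * p)^L)) / N
      = (Ca a * (p:ℝ) * (((L:ℝ)+1) * (sg p)^L)) * ((p:ℝ)^L / N) := by
    rw [mul_pow]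
    push_cast
    field_simp
  rw [e1]
  have e2 : (p:ℝ)^L / N ≤ 1 := by
    rw [div_le_one hN0]
    exact hpL
  have hpos : 0 ≤ Ca a * (p:ℝ) * (((L:ℝ)+1) * (sg p)^L) := by positivity
  calc (Ca a * (p:ℝ) * (((L:ℝ)+1) * (sg p)^L)) * ((p:ℝ)^L / N)
      ≤ (Ca a * (p:ℝ) * (((L:ℝ)+1) * (sg p)^L)) * 1 := mul_le_mul_of_nonneg_left e2 hpos
    _ = Ca a * ↑p * ((↑L + 1) * sg p ^ L) := by ring

/-- Fix a prime `p` and an integer `a ≥ 0`.  Writing `ξ_i(n)`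
for the number of nonzero base-`p` digits of `n` in positions `≥ i`, the set
`M = {n ≥ 2 : ξ_{⌊(1/2)log_p n⌋}(n) ≥ (1/5)·(log_p n + a)}` has natural
density `1`. -/
theorem density_one_generic_digits
    (p : ℕ) (hp : p.Prime) (a : ℕ) :
    Filter.Tendsto
      (fun N : ℕ =>
        (Set.ncard ({n : ℕ | 2 ≤ n ∧
            (1 / 5 : ℝ) * (Real.logb p n + a) ≤
              (Nat.card {j : ℕ // Nat.floor (Real.logb p n / 2) ≤ j ∧
                (Nat.digits p n).getD j 0 ≠ 0} : ℝ)} ∩ Set.Iio N) : ℝ) / N)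
      Filter.atTop (nhds 1) := by
  have hp2 : 2 ≤ p := hp.two_le
  set M : Set ℕ := {n : ℕ | 2 ≤ n ∧
      (1 / 5 : ℝ) * (Real.logb p n + a) ≤
        (Nat.card {j : ℕ // Nat.floor (Real.logb p n / 2) ≤ j ∧
          (Nat.digits p n).getD j 0 ≠ 0} : ℝ)} with hM
  -- finiteness facts
  have hIiofin : ∀ N : ℕ, (Set.Iio N).Finite := fun N => Set.finite_Iio N
  have hIiocard : ∀ N : ℕ, (Set.Iio N).ncard = N := fun N => by
    rw [← Finset.coe_range, Set.ncard_coe_finset, Finset.card_range]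
  have hgoodfin : ∀ N : ℕ, (M ∩ Set.Iio N).Finite :=
    fun N => (hIiofin N).subset Set.inter_subset_right
  have hgood_le : ∀ N : ℕ, (M ∩ Set.Iio N).ncard ≤ N := fun N => by
    have := Set.ncard_le_ncard (Set.inter_subset_right (s := M) (t := Set.Iio N)) (hIiofin N)
    rwa [hIiocard N] at this
  -- decomposition
  have hdecomp : ∀ N : ℕ, (N:ℝ) ≤ (M ∩ Set.Iio N).ncard + (badC p a N) + 2 := by
    intro N
    have hsub : Set.Iio N ⊆ (M ∩ Set.Iio N) ∪ (({n : ℕ | badP p a n} ∩ Set.Iio N) ∪ {0, 1}) := by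
      intro n hn
      by_cases h2 : 2 ≤ n
      · by_cases hc : (1 / 5 : ℝ) * (Real.logb p n + a) ≤
            (Nat.card {j : ℕ // Nat.floor (Real.logb p n / 2) ≤ j ∧
              (Nat.digits p n).getD j 0 ≠ 0} : ℝ)
        · exact Or.inl ⟨⟨h2, hc⟩, hn⟩
        · exact Or.inr (Or.inl ⟨⟨h2, hc⟩, hn⟩)
      · right; right
        have : n = 0 ∨ n = 1 := by omega
        simpa using this
    have hfin2 : (({n : ℕ | badP p a n} ∩ Set.Iio N) ∪ ({0, 1} : Set ℕ)).Finite :=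
      ((hIiofin N).subset Set.inter_subset_right).union ((Set.finite_singleton 1).insert 0)
    have h1 : N ≤ ((M ∩ Set.Iio N) ∪ (({n : ℕ | badP p a n} ∩ Set.Iio N) ∪ {0, 1})).ncard := by
      have := Set.ncard_le_ncard hsub ((hgoodfin N).union hfin2)
      rwa [hIiocard N] at this
    have h2 : ((M ∩ Set.Iio N) ∪ (({n : ℕ | badP p a n} ∩ Set.Iio N) ∪ {0, 1})).ncard
        ≤ (M ∩ Set.Iio N).ncard + (badC p a N) + 2 := by
      refine (Set.ncard_union_le _ _).trans ?_
      have h3 : (({n : ℕ | badP p a n} ∩ Set.Iio N) ∪ ({0,1} : Set ℕ)).ncard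
          ≤ badC p a N + 2 := by
        refine (Set.ncard_union_le _ _).trans ?_
        have : ({0,1} : Set ℕ).ncard = 2 := by
          rw [Set.ncard_pair (by norm_num)]
        rw [this]
        rfl
      omega
    have := h1.trans h2
    exact_mod_cast this
  -- squeeze
  have hupper : ∀ᶠ N : ℕ in Filter.atTop, (((M ∩ Set.Iio N).ncard : ℝ)) / N ≤ 1 := by
    filter_upwards [Filter.eventually_ge_atTop 1] with N hN
    rw [div_le_one (by exact_mod_cast hN : (0:ℝ) < N)]
    exact_mod_cast hgood_le N
  have hlower : ∀ᶠ N : ℕ in Filter.atTop,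
      1 - (gb p a (Nat.log p N) + 2 / N) ≤ (((M ∩ Set.Iio N).ncard : ℝ)) / N := by
    filter_upwards [Filter.eventually_ge_atTop 1] with N hN
    have hN0 : (0:ℝ) < N := by exact_mod_cast hN
    have h1 := hdecomp N
    have h2 := badC_div_le p a N hp2 hN
    have h3 : ((badC p a N : ℝ)) / N ≤ gb p a (Nat.log p N) := h2
    have h4 : 1 - ((badC p a N : ℝ)) / N - 2 / N ≤ (((M ∩ Set.Iio N).ncard : ℝ)) / N := by
      have e : (1:ℝ) - ((badC p a N : ℝ)) / N - 2 / N = ((N:ℝ) - badC p a N - 2) / N := by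
        field_simp
      rw [e]
      exact div_le_div_of_nonneg_right (by linarith) hN0.le
    linarith
  have hlim : Filter.Tendsto (fun N : ℕ => 1 - (gb p a (Nat.log p N) + 2 / (N:ℝ)))
      Filter.atTop (nhds 1) := by
    have t1 : Filter.Tendsto (fun N : ℕ => gb p a (Nat.log p N)) Filter.atTop (nhds 0) :=
      (tendsto_gb p a hp2).comp (tendsto_natLog p hp2)
    have t2 : Filter.Tendsto (fun N : ℕ => 2 / (N:ℝ)) Filter.atTop (nhds 0) := by
      simpa [div_eq_mul_inv] using tendsto_natCast_atTop_atTop.inv_tendsto_atTop.const_mul (2:ℝ)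
    have := (t1.add t2).const_sub 1
    simpa using this
  exact tendsto_of_tendsto_of_tendsto_of_le_of_le' hlim tendsto_const_nhds hlower hupper
end
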